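/- arXiv:1907.04465 — 5 statements merged into one kernel-verified Lean document; each statement's English description precedes it below -/
import Mathlib

section
/- Let a, b, c ∈ ℝ with b ≠ 0, a/b > (c/(2b))² + 2, and either a > b > 0 or a < b < 0. Then z = 0 is the only real root of the cubic f₁(z) = b z³ − c z² + (a − 2b) z, and β₂(0)·β₃(0) = (a − b)(2b − a) < 0, i.e. the unique root is of saddle type (Darbouxian type D₁). -/
/-!
Writing `t = a / b` and `Δ = (c/(2b))² − t + 2`, the hypothesis says `Δ < 0`. Since
`f₁(z) = z · (b z² − c z + (a − 2b))` and the quadratic factor has discriminant `4 b² Δ < 0`,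
`z = 0` is the only real root. Moreover `t > 2`, so
`(a − b)(2b − a) = b² (t − 1)(2 − t) < 0`.
-/

noncomputable section

/-- The cubic `f₁(z) = b z³ − c z² + (a − 2b) z`. -/
def cubicF (a b c z : ℝ) : ℝ := b * z ^ 3 - c * z ^ 2 + (a - 2 * b) * z

/-- `β₂(z) = 2b z² − c z + (a − b)`. -/
def beta2 (a b c z : ℝ) : ℝ := 2 * b * z ^ 2 - c * z + (a - b)

/-- `β₃(z) = −3b z² + 2c z + (2b − a)`. -/
def beta3 (a b c z : ℝ) : ℝ := -3 * b * z ^ 2 + 2 * c * z + (2 * b - a)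

section

variable {a b c : ℝ}

lemma cubicF_eq_mul (a b c z : ℝ) :
    cubicF a b c z = z * (b * (z * z) + -c * z + (a - 2 * b)) := by
  unfold cubicF
  ring

lemma discrim_eq_four_mul_sq_mul (hb : b ≠ 0) :
    discrim b (-c) (a - 2 * b) = 4 * b ^ 2 * ((c / (2 * b)) ^ 2 - a / b + 2) := by
  unfold discrim
  field_simp
  ring

lemma cubicF_eq_zero_iff (hb : b ≠ 0) (hΔ : (c / (2 * b)) ^ 2 - a / b + 2 < 0) (z : ℝ) :
    cubicF a b c z = 0 ↔ z = 0 := by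
  have hdiscrim : discrim b (-c) (a - 2 * b) < 0 := by
    rw [discrim_eq_four_mul_sq_mul hb]
    exact mul_neg_of_pos_of_neg (by positivity) hΔ
  have hquad := quadratic_ne_zero_of_discrim_ne_sq
    (fun s hs => (sq_nonneg s).not_gt (hs ▸ hdiscrim)) z
  rw [cubicF_eq_mul, mul_eq_zero]
  exact ⟨fun h => h.resolve_right hquad, Or.inl⟩

lemma beta2_mul_beta3_zero (a b c : ℝ) :
    beta2 a b c 0 * beta3 a b c 0 = (a - b) * (2 * b - a) := by
  simp [beta2, beta3]

lemma sub_mul_two_mul_sub_neg (hb : b ≠ 0) (ht : 2 < a / b) :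
    (a - b) * (2 * b - a) < 0 := by
  have hfactor : (a - b) * (2 * b - a) = b ^ 2 * ((a / b - 1) * (2 - a / b)) := by
    field_simp
  rw [hfactor]
  exact mul_neg_of_pos_of_neg (by positivity) (mul_neg_of_pos_of_neg (by linarith) (by linarith))

end

theorem stmt0_general (a b c : ℝ) (hb : b ≠ 0)
    (h1 : a / b > (c / (2 * b)) ^ 2 + 2) :
    (∀ z : ℝ, cubicF a b c z = 0 ↔ z = 0) ∧
    beta2 a b c 0 * beta3 a b c 0 = (a - b) * (2 * b - a) ∧
    (a - b) * (2 * b - a) < 0 := by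
  have ht : 2 < a / b := by linarith [sq_nonneg (c / (2 * b))]
  exact ⟨cubicF_eq_zero_iff hb (by linarith), beta2_mul_beta3_zero a b c,
    sub_mul_two_mul_sub_neg hb ht⟩

theorem stmt0 (a b c : ℝ) (hb : b ≠ 0)
    (h1 : a / b > (c / (2 * b)) ^ 2 + 2)
    (h2 : (b < a ∧ 0 < b) ∨ (a < b ∧ b < 0)) :
    (∀ z : ℝ, cubicF a b c z = 0 ↔ z = 0) ∧
    beta2 a b c 0 * beta3 a b c 0 = (a - b) * (2 * b - a) ∧
    (a - b) * (2 * b - a) < 0 :=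
  stmt0_general a b c hb h1
end
end

section
/- Let a, b, c, d, δ, ε, ζ, λ ∈ ℝ and set a₁ = d + 2ε, a₂ = b + 2ζ, b₁ = a − b + 2(δ − ζ), b₂ = d − c + 2(ε − λ). Define F(x,y,z) = (a₁x + a₂y)z² + (b₁x + b₂y)z − (a₁x + a₂y) and the Lie–Cartan vector field X : ℝ³ → ℝ³, X(x,y,z) = (F_z, z·F_z, −(F_x + z·F_y)). Let z₀ ∈ ℝ be a root of the cubic f₁(z) = a₂z³ + (a₁ + b₂)z² + (b₁ − a₂)z − a₁. Then X(0,0,z₀) = 0, and the total derivative DX(0,0,z₀) satisfies: DX(0,0,z₀)(1, z₀, 0) = β₂(z₀)·(1, z₀, 0) and DX(0,0,z₀)(0, 0, 1) = β₃(z₀)·(0, 0, 1), where β₂(z₀) = b₁ + (2a₁ + b₂)z₀ + 2a₂z₀² and β₃(z₀) = (a₂ − b₁) − 2(a₁ + b₂)z₀ − 3a₂z₀²; moreover DX(0,0,z₀) has determinant 0, so its eigenvalues are 0, β₂(z₀) and β₃(z₀). -/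
/-!
Along the fibre `x = y = 0` everything is explicit. Since `F` is linear in `(x, y)`, `F_z` is
`(2a₁z + b₁)x + (2a₂z + b₂)y`, while `F_x + z F_y = f₁(z)`; hence `X = (F_z, z F_z, -f₁(z))`.
At `(0, 0, z₀)` the factor `F_z` vanishes, so `DX = (1, z₀, 0) ⊗ dF_z + (-f₁'(z₀)) e₃ ⊗ e₃`
with `dF_z = (2a₁z₀ + b₁, 2a₂z₀ + b₂, 0)`. Such a map kills a vector of the `(x, y)`-plane,
and has the eigenvectors `(1, z₀, 0)` and `e₃`, with eigenvalues `dF_z(1, z₀, 0) = β₂` and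
`-f₁'(z₀) = β₃`.
-/

noncomputable section

/-- `F(x,y,z) = (a₁x + a₂y)z² + (b₁x + b₂y)z − (a₁x + a₂y)`. -/
def FLie (a₁ a₂ b₁ b₂ : ℝ) (p : ℝ × ℝ × ℝ) : ℝ :=
  (a₁ * p.1 + a₂ * p.2.1) * p.2.2 ^ 2 + (b₁ * p.1 + b₂ * p.2.1) * p.2.2 -
    (a₁ * p.1 + a₂ * p.2.1)

/-- The Lie–Cartan vector field `X = (F_z, z·F_z, −(F_x + z·F_y))`. -/
def XLie (a₁ a₂ b₁ b₂ : ℝ) (p : ℝ × ℝ × ℝ) : ℝ × ℝ × ℝ :=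
  (fderiv ℝ (FLie a₁ a₂ b₁ b₂) p (0, 0, 1),
   p.2.2 * fderiv ℝ (FLie a₁ a₂ b₁ b₂) p (0, 0, 1),
   -(fderiv ℝ (FLie a₁ a₂ b₁ b₂) p (1, 0, 0) +
      p.2.2 * fderiv ℝ (FLie a₁ a₂ b₁ b₂) p (0, 1, 0)))

open Module.End

lemma hasEigenvalue_of_apply_eq_smul {R M : Type*} [CommRing R] [AddCommGroup M] [Module R M]
    {f : Module.End R M} {μ : R} {v : M} (hv : v ≠ 0) (h : f v = μ • v) : f.HasEigenvalue μ :=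
  hasEigenvalue_of_hasEigenvector ⟨mem_eigenspace_iff.mpr h, hv⟩

namespace LieCartan

section JacobianModel

@[simps]
def jacobianModel (α β z γ : ℝ) : Module.End ℝ (ℝ × ℝ × ℝ) where
  toFun v := (α * v.1 + β * v.2.1, z * (α * v.1 + β * v.2.1), γ * v.2.2)
  map_add' u v := by ext <;> simp only [Prod.fst_add, Prod.snd_add] <;> ring
  map_smul' c v := by
    ext <;> simp only [Prod.smul_fst, Prod.smul_snd, smul_eq_mul, RingHom.id_apply] <;> ring

variable {α β z γ μ : ℝ}

lemma jacobianModel_apply_horizontal :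
    jacobianModel α β z γ (1, z, 0) = (α + β * z) • (1, z, 0) := by
  simp only [jacobianModel_apply, Prod.smul_mk, smul_eq_mul]
  ext <;> simp only <;> ring

lemma jacobianModel_apply_vertical : jacobianModel α β z γ (0, 0, 1) = γ • (0, 0, 1) := by
  simp [jacobianModel_apply]

lemma hasEigenvalue_jacobianModel_zero : (jacobianModel α β z γ).HasEigenvalue 0 := by
  by_cases h : α = 0 ∧ β = 0
  · refine hasEigenvalue_of_apply_eq_smul (v := (1, 0, 0)) (by simp) ?_
    simp [h.1, h.2]
  · refine hasEigenvalue_of_apply_eq_smul (v := (β, -α, 0)) ?_ ?_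
    · contrapose! h
      simp_all [Prod.ext_iff]
    · simp only [jacobianModel_apply, zero_smul, Prod.mk_eq_zero]
      refine ⟨?_, ?_, ?_⟩ <;> ring

lemma det_jacobianModel : LinearMap.det (jacobianModel α β z γ) = 0 :=
  ((LinearMap.hasEigenvalue_zero_tfae _).out 0 3).mp hasEigenvalue_jacobianModel_zero

lemma eq_of_hasEigenvalue_jacobianModel (hμ : (jacobianModel α β z γ).HasEigenvalue μ) :
    μ = 0 ∨ μ = α + β * z ∨ μ = γ := by
  obtain ⟨⟨x, y, w⟩, hv⟩ := hμ.exists_hasEigenvector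
  have hxyw : (x, y, w) ≠ (0, 0, 0) := hv.2
  have h := hv.apply_eq_smul
  simp only [jacobianModel_apply, Prod.smul_mk, smul_eq_mul, Prod.mk.injEq] at h
  obtain ⟨h₁, h₂, h₃⟩ := h
  by_contra! hne
  obtain ⟨hμ0, hμα, hμγ⟩ := hne
  have hw : w = 0 := by
    have : (γ - μ) * w = 0 := by linear_combination h₃
    exact (mul_eq_zero.mp this).resolve_left (sub_ne_zero.mpr hμγ.symm)
  have hy : y = z * x := mul_left_cancel₀ hμ0 (by linear_combination z * h₁ - h₂)
  have hx : x = 0 := by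
    have : (α + β * z - μ) * x = 0 := by linear_combination h₁ - β * hy
    exact (mul_eq_zero.mp this).resolve_left (sub_ne_zero.mpr hμα.symm)
  exact hxyw (by simp [hx, hy, hw])

lemma hasEigenvalue_jacobianModel_iff :
    (jacobianModel α β z γ).HasEigenvalue μ ↔ μ = 0 ∨ μ = α + β * z ∨ μ = γ := by
  refine ⟨eq_of_hasEigenvalue_jacobianModel, ?_⟩
  rintro (rfl | rfl | rfl)
  · exact hasEigenvalue_jacobianModel_zero
  · exact hasEigenvalue_of_apply_eq_smul (by simp) jacobianModel_apply_horizontal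
  · exact hasEigenvalue_of_apply_eq_smul (by simp) jacobianModel_apply_vertical

end JacobianModel

section LieCartanField

open ContinuousLinearMap

lemma hasFDerivAt_x (p : ℝ × ℝ × ℝ) :
    HasFDerivAt (fun q : ℝ × ℝ × ℝ => q.1) (fst ℝ ℝ (ℝ × ℝ)) p :=
  hasFDerivAt_fst

lemma hasFDerivAt_y (p : ℝ × ℝ × ℝ) :
    HasFDerivAt (fun q : ℝ × ℝ × ℝ => q.2.1) ((fst ℝ ℝ ℝ).comp (snd ℝ ℝ (ℝ × ℝ))) p :=
  hasFDerivAt_fst.comp p hasFDerivAt_snd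

lemma hasFDerivAt_z (p : ℝ × ℝ × ℝ) :
    HasFDerivAt (fun q : ℝ × ℝ × ℝ => q.2.2) ((snd ℝ ℝ ℝ).comp (snd ℝ ℝ (ℝ × ℝ))) p :=
  hasFDerivAt_snd.comp p hasFDerivAt_snd

variable (a₁ a₂ b₁ b₂ : ℝ)

def FLieDz (p : ℝ × ℝ × ℝ) : ℝ :=
  (2 * a₁ * p.2.2 + b₁) * p.1 + (2 * a₂ * p.2.2 + b₂) * p.2.1

def umbilicCubic (z : ℝ) : ℝ :=
  a₂ * z ^ 3 + (a₁ + b₂) * z ^ 2 + (b₁ - a₂) * z - a₁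

lemma hasDerivAt_umbilicCubic (z : ℝ) :
    HasDerivAt (umbilicCubic a₁ a₂ b₁ b₂) (3 * a₂ * z ^ 2 + 2 * (a₁ + b₂) * z + (b₁ - a₂)) z :=
  ((((hasDerivAt_pow 3 z).const_mul a₂).add ((hasDerivAt_pow 2 z).const_mul (a₁ + b₂))).add
    ((hasDerivAt_id z).const_mul (b₁ - a₂))).sub_const a₁ |>.congr_deriv (by norm_num; ring)

lemma fderiv_FLie_apply (p v : ℝ × ℝ × ℝ) :
    fderiv ℝ (FLie a₁ a₂ b₁ b₂) p v =
      (a₁ * p.2.2 ^ 2 + b₁ * p.2.2 - a₁) * v.1 +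
      (a₂ * p.2.2 ^ 2 + b₂ * p.2.2 - a₂) * v.2.1 +
      (2 * (a₁ * p.1 + a₂ * p.2.1) * p.2.2 + (b₁ * p.1 + b₂ * p.2.1)) * v.2.2 := by
  have hlin (c₁ c₂ : ℝ) := ((hasFDerivAt_x p).const_mul c₁).add ((hasFDerivAt_y p).const_mul c₂)
  have hF : HasFDerivAt (FLie a₁ a₂ b₁ b₂) _ p :=
    (((hlin a₁ a₂).mul ((hasFDerivAt_z p).pow 2)).add ((hlin b₁ b₂).mul (hasFDerivAt_z p))).sub
      (hlin a₁ a₂)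
  rw [hF.fderiv]
  simp only [Pi.add_apply, Nat.add_one_sub_one, pow_one, nsmul_eq_mul, Nat.cast_ofNat, smul_add,
    sub_apply, add_apply, smul_apply, comp_apply, coe_snd', smul_eq_mul, coe_fst']
  ring

lemma XLie_eq : XLie a₁ a₂ b₁ b₂ = fun p =>
    (FLieDz a₁ a₂ b₁ b₂ p, p.2.2 * FLieDz a₁ a₂ b₁ b₂ p, -umbilicCubic a₁ a₂ b₁ b₂ p.2.2) := by
  funext p
  refine Prod.ext ?_ (Prod.ext ?_ ?_) <;>
    simp only [XLie, fderiv_FLie_apply, FLieDz, umbilicCubic] <;> ring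

lemma XLie_zero_zero (z : ℝ) :
    XLie a₁ a₂ b₁ b₂ (0, 0, z) = (0, 0, -umbilicCubic a₁ a₂ b₁ b₂ z) := by
  simp [XLie_eq, FLieDz]

lemma fderiv_XLie_apply (z : ℝ) (v : ℝ × ℝ × ℝ) :
    fderiv ℝ (XLie a₁ a₂ b₁ b₂) (0, 0, z) v =
      jacobianModel (2 * a₁ * z + b₁) (2 * a₂ * z + b₂) z
        ((a₂ - b₁) - 2 * (a₁ + b₂) * z - 3 * a₂ * z ^ 2) v := by
  set q : ℝ × ℝ × ℝ := (0, 0, z)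
  have hz := hasFDerivAt_z q
  have hFz : HasFDerivAt (FLieDz a₁ a₂ b₁ b₂) _ q :=
    (((hz.const_mul (2 * a₁)).add_const b₁).mul (hasFDerivAt_x q)).add
      (((hz.const_mul (2 * a₂)).add_const b₂).mul (hasFDerivAt_y q))
  have hf₁ := (hasDerivAt_umbilicCubic a₁ a₂ b₁ b₂ z).comp_hasFDerivAt q hz
  have hX : HasFDerivAt (XLie a₁ a₂ b₁ b₂) _ q :=
    (hFz.prodMk ((hz.mul hFz).prodMk hf₁.neg)).congr_of_eventuallyEq
      (.of_forall fun p => congrFun (XLie_eq a₁ a₂ b₁ b₂) p)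
  rw [hX.fderiv]
  simp only [q, FLieDz, zero_smul, add_zero, smul_add, mul_zero, prod_apply, add_apply,
    smul_apply, coe_fst', smul_eq_mul, comp_apply, coe_snd', neg_apply, jacobianModel_apply,
    Prod.mk.injEq, true_and]
  constructor <;> ring

end LieCartanField

end LieCartan

open LieCartan

theorem stmt10_general
    (a₁ a₂ b₁ b₂ : ℝ)
    (z₀ : ℝ)
    (hroot : a₂ * z₀ ^ 3 + (a₁ + b₂) * z₀ ^ 2 + (b₁ - a₂) * z₀ - a₁ = 0) :
    XLie a₁ a₂ b₁ b₂ (0, 0, z₀) = 0 ∧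
    fderiv ℝ (XLie a₁ a₂ b₁ b₂) (0, 0, z₀) (1, z₀, 0) =
      (b₁ + (2 * a₁ + b₂) * z₀ + 2 * a₂ * z₀ ^ 2) • ((1 : ℝ), z₀, (0 : ℝ)) ∧
    fderiv ℝ (XLie a₁ a₂ b₁ b₂) (0, 0, z₀) (0, 0, 1) =
      ((a₂ - b₁) - 2 * (a₁ + b₂) * z₀ - 3 * a₂ * z₀ ^ 2) • ((0 : ℝ), (0 : ℝ), (1 : ℝ)) ∧
    LinearMap.det ((fderiv ℝ (XLie a₁ a₂ b₁ b₂) (0, 0, z₀)) :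
      (ℝ × ℝ × ℝ) →ₗ[ℝ] (ℝ × ℝ × ℝ)) = 0 ∧
    (∀ μ : ℝ, Module.End.HasEigenvalue
        ((fderiv ℝ (XLie a₁ a₂ b₁ b₂) (0, 0, z₀) : (ℝ × ℝ × ℝ) →ₗ[ℝ] (ℝ × ℝ × ℝ))) μ ↔
      (μ = 0 ∨ μ = b₁ + (2 * a₁ + b₂) * z₀ + 2 * a₂ * z₀ ^ 2 ∨
        μ = (a₂ - b₁) - 2 * (a₁ + b₂) * z₀ - 3 * a₂ * z₀ ^ 2)) := by
  have hD : (fderiv ℝ (XLie a₁ a₂ b₁ b₂) (0, 0, z₀) : Module.End ℝ (ℝ × ℝ × ℝ)) =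
      jacobianModel (2 * a₁ * z₀ + b₁) (2 * a₂ * z₀ + b₂) z₀
        ((a₂ - b₁) - 2 * (a₁ + b₂) * z₀ - 3 * a₂ * z₀ ^ 2) :=
    LinearMap.ext (fderiv_XLie_apply a₁ a₂ b₁ b₂ z₀)
  have hβ₂ : b₁ + (2 * a₁ + b₂) * z₀ + 2 * a₂ * z₀ ^ 2 =
      (2 * a₁ * z₀ + b₁) + (2 * a₂ * z₀ + b₂) * z₀ := by ring
  refine ⟨?_, ?_, ?_, ?_, fun μ => ?_⟩
  · simp [XLie_zero_zero, umbilicCubic, hroot]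
  · rw [fderiv_XLie_apply, jacobianModel_apply_horizontal, hβ₂]
  · rw [fderiv_XLie_apply, jacobianModel_apply_vertical]
  · rw [hD]
    exact det_jacobianModel
  · rw [hD, hasEigenvalue_jacobianModel_iff, hβ₂]

theorem stmt10 (a b c d δ ε ζ lam : ℝ)
    (a₁ a₂ b₁ b₂ : ℝ)
    (ha₁ : a₁ = d + 2 * ε) (ha₂ : a₂ = b + 2 * ζ)
    (hb₁ : b₁ = a - b + 2 * (δ - ζ)) (hb₂ : b₂ = d - c + 2 * (ε - lam))
    (z₀ : ℝ)
    (hroot : a₂ * z₀ ^ 3 + (a₁ + b₂) * z₀ ^ 2 + (b₁ - a₂) * z₀ - a₁ = 0) :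
    XLie a₁ a₂ b₁ b₂ (0, 0, z₀) = 0 ∧
    fderiv ℝ (XLie a₁ a₂ b₁ b₂) (0, 0, z₀) (1, z₀, 0) =
      (b₁ + (2 * a₁ + b₂) * z₀ + 2 * a₂ * z₀ ^ 2) • ((1 : ℝ), z₀, (0 : ℝ)) ∧
    fderiv ℝ (XLie a₁ a₂ b₁ b₂) (0, 0, z₀) (0, 0, 1) =
      ((a₂ - b₁) - 2 * (a₁ + b₂) * z₀ - 3 * a₂ * z₀ ^ 2) • ((0 : ℝ), (0 : ℝ), (1 : ℝ)) ∧
    LinearMap.det ((fderiv ℝ (XLie a₁ a₂ b₁ b₂) (0, 0, z₀)) :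
      (ℝ × ℝ × ℝ) →ₗ[ℝ] (ℝ × ℝ × ℝ)) = 0 ∧
    (∀ μ : ℝ, Module.End.HasEigenvalue
        ((fderiv ℝ (XLie a₁ a₂ b₁ b₂) (0, 0, z₀) : (ℝ × ℝ × ℝ) →ₗ[ℝ] (ℝ × ℝ × ℝ))) μ ↔
      (μ = 0 ∨ μ = b₁ + (2 * a₁ + b₂) * z₀ + 2 * a₂ * z₀ ^ 2 ∨
        μ = (a₂ - b₁) - 2 * (a₁ + b₂) * z₀ - 3 * a₂ * z₀ ^ 2)) :=
  stmt10_general a₁ a₂ b₁ b₂ z₀ hroot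
end
end

section
/- Let k ∈ ℝ. Assume additionally the η-umbilicity relations f_{xx}(0,0) = 2(k − g_{xx}(0,0)), f_{xy}(0,0) = 0, f_{yy}(0,0) = 2(k − g_{yy}(0,0)), and g_{xy}(0,0) = 0. If η : U → ℝ⁴ is a C¹ map satisfying ⟨η, ξ⟩ = 1, ⟨η, η⟩ = 0, ⟨η, Φ_x⟩ = 0 and ⟨η, Φ_y⟩ = 0 on U, then η(0,0) = (−1/2, 0, 0, 1/2), η_x(0,0) = (0, −k, 0, 0) and η_y(0,0) = (0, 0, −k, 0); that is, the 1-jet of η at the origin is (−1/2, −kx, −ky, 1/2). -/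
noncomputable section

/-- The Minkowski scalar product `⟨u,v⟩ = −u₀v₀ + u₁v₁ + u₂v₂ + u₃v₃` on `ℝ⁴₁`. -/
def mink (u v : Fin 4 → ℝ) : ℝ :=
  -(u 0 * v 0) + u 1 * v 1 + u 2 * v 2 + u 3 * v 3

/-- Partial derivative in the `x`-direction. -/
def pdx {E : Type*} [NormedAddCommGroup E] [NormedSpace ℝ E]
    (f : ℝ × ℝ → E) (p : ℝ × ℝ) : E := fderiv ℝ f p (1, 0)

/-- Partial derivative in the `y`-direction. -/
def pdy {E : Type*} [NormedAddCommGroup E] [NormedSpace ℝ E]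
    (f : ℝ × ℝ → E) (p : ℝ × ℝ) : E := fderiv ℝ f p (0, 1)

/-- The null vector field `ξ = (1, N)` with `N = (1+f_x²+f_y²)^{-1/2}(−f_x, −f_y, 1)`. -/
def xiMap (f : ℝ × ℝ → ℝ) (p : ℝ × ℝ) : Fin 4 → ℝ :=
  ![1, -pdx f p / Real.sqrt (1 + (pdx f p) ^ 2 + (pdy f p) ^ 2),
    -pdy f p / Real.sqrt (1 + (pdx f p) ^ 2 + (pdy f p) ^ 2),
    1 / Real.sqrt (1 + (pdx f p) ^ 2 + (pdy f p) ^ 2)]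

/-- The parametrization `Φ(x,y) = (1, x, y, f(x,y)) + g(x,y)·ξ(x,y)` of the spacelike
surface `S` in the null hypersurface of `ℝ⁴₁`. -/
def PhiMap (f g : ℝ × ℝ → ℝ) (p : ℝ × ℝ) : Fin 4 → ℝ :=
  ![1, p.1, p.2, f p] + g p • xiMap f p

namespace Aux11

variable {φ ψ : ℝ × ℝ → ℝ} {p : ℝ × ℝ}

lemma D_add (hφ : DifferentiableAt ℝ φ p) (hψ : DifferentiableAt ℝ ψ p) (v : ℝ × ℝ) :
    fderiv ℝ (fun q => φ q + ψ q) p v = fderiv ℝ φ p v + fderiv ℝ ψ p v := by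
  rw [fderiv_fun_add hφ hψ]; rfl

lemma D_neg (v : ℝ × ℝ) :
    fderiv ℝ (fun q => -φ q) p v = -fderiv ℝ φ p v := by
  rw [fderiv_fun_neg]; rfl

lemma D_mul (hφ : DifferentiableAt ℝ φ p) (hψ : DifferentiableAt ℝ ψ p) (v : ℝ × ℝ) :
    fderiv ℝ (fun q => φ q * ψ q) p v
      = fderiv ℝ φ p v * ψ p + φ p * fderiv ℝ ψ p v := by
  rw [fderiv_fun_mul hφ hψ]
  simp only [ContinuousLinearMap.add_apply, ContinuousLinearMap.smul_apply, smul_eq_mul]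
  ring

lemma D_inv (hψ : DifferentiableAt ℝ ψ p) (h : ψ p ≠ 0) (v : ℝ × ℝ) :
    fderiv ℝ (fun q => (ψ q)⁻¹) p v = -fderiv ℝ ψ p v / ψ p ^ 2 := by
  have h1 := ((hasFDerivAt_inv h).comp p hψ.hasFDerivAt).fderiv
  rw [show (fun q => (ψ q)⁻¹) = Inv.inv ∘ ψ from rfl, h1]
  simp only [ContinuousLinearMap.comp_apply, ContinuousLinearMap.smulRight_apply,
    ContinuousLinearMap.one_apply, ContinuousLinearMap.toSpanSingleton_apply, smul_eq_mul]
  field_simp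

lemma D_div (hφ : DifferentiableAt ℝ φ p) (hψ : DifferentiableAt ℝ ψ p) (h : ψ p ≠ 0)
    (v : ℝ × ℝ) :
    fderiv ℝ (fun q => φ q / ψ q) p v
      = (fderiv ℝ φ p v * ψ p - φ p * fderiv ℝ ψ p v) / ψ p ^ 2 := by
  rw [show (fun q => φ q / ψ q) = fun q => φ q * (ψ q)⁻¹ from
    funext fun q => div_eq_mul_inv _ _]
  rw [D_mul (ψ := fun q => (ψ q)⁻¹) hφ (hψ.inv h), D_inv hψ h]
  field_simp
  ring

lemma D_sq (hψ : DifferentiableAt ℝ ψ p) (v : ℝ × ℝ) :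
    fderiv ℝ (fun q => ψ q ^ 2) p v = 2 * ψ p * fderiv ℝ ψ p v := by
  rw [show (fun q => ψ q ^ 2) = fun q => ψ q * ψ q from funext fun q => sq (ψ q)]
  rw [D_mul hψ hψ]
  ring

lemma D_sqrt (hψ : DifferentiableAt ℝ ψ p) (h : ψ p ≠ 0) (v : ℝ × ℝ) :
    fderiv ℝ (fun q => Real.sqrt (ψ q)) p v
      = fderiv ℝ ψ p v / (2 * Real.sqrt (ψ p)) := by
  rw [(hψ.hasFDerivAt.sqrt h).fderiv]
  simp only [ContinuousLinearMap.smul_apply, smul_eq_mul]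
  rw [div_mul_eq_mul_div, one_mul]

lemma D_fst (v : ℝ × ℝ) : fderiv ℝ (fun q : ℝ × ℝ => q.1) p v = v.1 := by
  rw [show (fun q : ℝ × ℝ => q.1) = @Prod.fst ℝ ℝ from rfl, hasFDerivAt_fst.fderiv]; rfl

lemma D_snd (v : ℝ × ℝ) : fderiv ℝ (fun q : ℝ × ℝ => q.2) p v = v.2 := by
  rw [show (fun q : ℝ × ℝ => q.2) = @Prod.snd ℝ ℝ from rfl, hasFDerivAt_snd.fderiv]; rfl

lemma D_const (c : ℝ) (v : ℝ × ℝ) : fderiv ℝ (fun _ : ℝ × ℝ => c) p v = 0 := by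
  rw [fderiv_const_apply]; rfl

lemma D_proj {F : ℝ × ℝ → Fin 4 → ℝ} (hF : DifferentiableAt ℝ F p) (v : ℝ × ℝ) (i : Fin 4) :
    fderiv ℝ F p v i = fderiv ℝ (fun q => F q i) p v := by
  have h := ((ContinuousLinearMap.proj (R := ℝ) (φ := fun _ : Fin 4 => ℝ) i).hasFDerivAt.comp
    p hF.hasFDerivAt).fderiv
  rw [show (fun q => F q i) = (ContinuousLinearMap.proj (R := ℝ) (φ := fun _ : Fin 4 => ℝ) i) ∘ F
    from rfl, h]
  rfl

lemma D_apply {F : ℝ × ℝ → (ℝ × ℝ →L[ℝ] ℝ)} (hF : DifferentiableAt ℝ F p) (v w : ℝ × ℝ) :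
    fderiv ℝ (fun q => F q w) p v = fderiv ℝ F p v w := by
  have h := ((ContinuousLinearMap.apply ℝ ℝ w).hasFDerivAt.comp p hF.hasFDerivAt).fderiv
  rw [show (fun q => F q w) = (ContinuousLinearMap.apply ℝ ℝ w) ∘ F from rfl, h]
  rfl

lemma contDiffOn_pdx {V : Set (ℝ × ℝ)} (hV : IsOpen V) (hφ : ContDiffOn ℝ (⊤ : ℕ∞) φ V) :
    ContDiffOn ℝ (⊤ : ℕ∞) (pdx φ) V := by
  have h : ContDiffOn ℝ (⊤ : ℕ∞) (fderiv ℝ φ) V := hφ.fderiv_of_isOpen hV (by simp)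
  exact (ContinuousLinearMap.apply ℝ ℝ ((1 : ℝ), (0 : ℝ))).contDiff.comp_contDiffOn h

lemma contDiffOn_pdy {V : Set (ℝ × ℝ)} (hV : IsOpen V) (hφ : ContDiffOn ℝ (⊤ : ℕ∞) φ V) :
    ContDiffOn ℝ (⊤ : ℕ∞) (pdy φ) V := by
  have h : ContDiffOn ℝ (⊤ : ℕ∞) (fderiv ℝ φ) V := hφ.fderiv_of_isOpen hV (by simp)
  exact (ContinuousLinearMap.apply ℝ ℝ ((0 : ℝ), (1 : ℝ))).contDiff.comp_contDiffOn h

lemma pdx_pdy_symm (hφ : ContDiffAt ℝ 2 φ p) : pdx (pdy φ) p = pdy (pdx φ) p := by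
  have hd : DifferentiableAt ℝ (fderiv ℝ φ) p :=
    (hφ.fderiv_right (m := 1) (by norm_num)).differentiableAt (by norm_num)
  have hsym := hφ.isSymmSndFDerivAt (by simp [minSmoothness_of_isRCLikeNormedField])
  have e1 : pdx (pdy φ) p = fderiv ℝ (fderiv ℝ φ) p (1, 0) (0, 1) := by
    show fderiv ℝ (pdy φ) p (1, 0) = _
    rw [show pdy φ = fun q => fderiv ℝ φ q (0, 1) from rfl, D_apply hd]
  have e2 : pdy (pdx φ) p = fderiv ℝ (fderiv ℝ φ) p (0, 1) (1, 0) := by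
    show fderiv ℝ (pdx φ) p (0, 1) = _
    rw [show pdx φ = fun q => fderiv ℝ φ q (1, 0) from rfl, D_apply hd]
  rw [e1, e2, hsym]

end Aux11

open Aux11

theorem stmt11 (f g : ℝ × ℝ → ℝ) (U : Set (ℝ × ℝ)) (hU : U ∈ nhds ((0, 0) : ℝ × ℝ))
    (hf : ContDiffOn ℝ (⊤ : ℕ∞) f U) (hg : ContDiffOn ℝ (⊤ : ℕ∞) g U)
    (hfx : pdx f (0, 0) = 0) (hfy : pdy f (0, 0) = 0)
    (hg0 : g (0, 0) = 0) (hgx : pdx g (0, 0) = 0) (hgy : pdy g (0, 0) = 0)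
    (k : ℝ)
    (hfxx : pdx (pdx f) (0, 0) = 2 * (k - pdx (pdx g) (0, 0)))
    (hfxy : pdx (pdy f) (0, 0) = 0)
    (hfyy : pdy (pdy f) (0, 0) = 2 * (k - pdy (pdy g) (0, 0)))
    (hgxy : pdx (pdy g) (0, 0) = 0)
    (η : ℝ × ℝ → (Fin 4 → ℝ)) (hη : ContDiffOn ℝ 1 η U)
    (h1 : ∀ p ∈ U, mink (η p) (xiMap f p) = 1)
    (h2 : ∀ p ∈ U, mink (η p) (η p) = 0)
    (h3 : ∀ p ∈ U, mink (η p) (pdx (PhiMap f g) p) = 0)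
    (h4 : ∀ p ∈ U, mink (η p) (pdy (PhiMap f g) p) = 0) :
    η (0, 0) = ![-(1 / 2), 0, 0, 1 / 2] ∧
    pdx η (0, 0) = ![0, -k, 0, 0] ∧
    pdy η (0, 0) = ![0, 0, -k, 0] := by
  classical
  -- the open set
  have hV : IsOpen (interior U) := isOpen_interior
  set V := interior U with hVdef
  have hpV : ((0, 0) : ℝ × ℝ) ∈ V := mem_interior_iff_mem_nhds.2 hU
  have hVn : V ∈ nhds ((0, 0) : ℝ × ℝ) := hV.mem_nhds hpV
  have hVU : V ⊆ U := interior_subset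
  have hfV : ContDiffOn ℝ (⊤ : ℕ∞) f V := hf.mono hVU
  have hgV : ContDiffOn ℝ (⊤ : ℕ∞) g V := hg.mono hVU
  have dV : ∀ {φ : ℝ × ℝ → ℝ}, ContDiffOn ℝ (⊤ : ℕ∞) φ V → ∀ {q : ℝ × ℝ}, q ∈ V →
      DifferentiableAt ℝ φ q := by
    intro φ hφ q hq
    exact (hφ.contDiffAt (hV.mem_nhds hq)).differentiableAt (by simp)
  -- basic derived functions
  have hAx : ContDiffOn ℝ (⊤ : ℕ∞) (pdx f) V := contDiffOn_pdx hV hfV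
  have hAy : ContDiffOn ℝ (⊤ : ℕ∞) (pdy f) V := contDiffOn_pdy hV hfV
  have hCx : ContDiffOn ℝ (⊤ : ℕ∞) (pdx g) V := contDiffOn_pdx hV hgV
  have hCy : ContDiffOn ℝ (⊤ : ℕ∞) (pdy g) V := contDiffOn_pdy hV hgV
  have hinner : ContDiffOn ℝ (⊤ : ℕ∞) (fun q => 1 + pdx f q ^ 2 + pdy f q ^ 2) V :=
    (contDiffOn_const.add (hAx.pow 2)).add (hAy.pow 2)
  have hinnerpos : ∀ q : ℝ × ℝ, 0 < 1 + pdx f q ^ 2 + pdy f q ^ 2 := fun q => by positivity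
  set W : ℝ × ℝ → ℝ := fun q => Real.sqrt (1 + pdx f q ^ 2 + pdy f q ^ 2) with hWdef
  have hWpos : ∀ q, 0 < W q := fun q => Real.sqrt_pos.2 (hinnerpos q)
  have hWV : ContDiffOn ℝ (⊤ : ℕ∞) W V := fun q hq =>
    (Real.contDiffAt_sqrt (hinnerpos q).ne').comp_contDiffWithinAt q (hinner q hq)
  set x1 : ℝ × ℝ → ℝ := fun q => -pdx f q / W q with hx1def
  set x2 : ℝ × ℝ → ℝ := fun q => -pdy f q / W q with hx2def
  set x3 : ℝ × ℝ → ℝ := fun q => 1 / W q with hx3def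
  have hx1V : ContDiffOn ℝ (⊤ : ℕ∞) x1 V := hAx.neg.div hWV fun q hq => (hWpos q).ne'
  have hx2V : ContDiffOn ℝ (⊤ : ℕ∞) x2 V := hAy.neg.div hWV fun q hq => (hWpos q).ne'
  have hx3V : ContDiffOn ℝ (⊤ : ℕ∞) x3 V := contDiffOn_const.div hWV fun q hq => (hWpos q).ne'
  have hPx1 : ContDiffOn ℝ (⊤ : ℕ∞) (pdx x1) V := contDiffOn_pdx hV hx1V
  have hPx2 : ContDiffOn ℝ (⊤ : ℕ∞) (pdx x2) V := contDiffOn_pdx hV hx2V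
  have hPx3 : ContDiffOn ℝ (⊤ : ℕ∞) (pdx x3) V := contDiffOn_pdx hV hx3V
  have hPy1 : ContDiffOn ℝ (⊤ : ℕ∞) (pdy x1) V := contDiffOn_pdy hV hx1V
  have hPy2 : ContDiffOn ℝ (⊤ : ℕ∞) (pdy x2) V := contDiffOn_pdy hV hx2V
  have hPy3 : ContDiffOn ℝ (⊤ : ℕ∞) (pdy x3) V := contDiffOn_pdy hV hx3V
  -- values at the origin
  have hW0 : W (0, 0) = 1 := by
    rw [hWdef]
    show Real.sqrt (1 + pdx f (0, 0) ^ 2 + pdy f (0, 0) ^ 2) = 1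
    rw [hfx, hfy]; norm_num
  have hx1v : x1 (0, 0) = 0 := by
    rw [hx1def]
    show -pdx f (0, 0) / W (0, 0) = 0
    rw [hfx]; norm_num
  have hx2v : x2 (0, 0) = 0 := by
    rw [hx2def]
    show -pdy f (0, 0) / W (0, 0) = 0
    rw [hfy]; norm_num
  have hx3v : x3 (0, 0) = 1 := by
    rw [hx3def]
    show 1 / W (0, 0) = 1
    rw [hW0]; norm_num
  -- derivatives of W and the xi components at the origin
  have hdW : ∀ v : ℝ × ℝ, fderiv ℝ W (0, 0) v = 0 := by
    intro v
    rw [hWdef]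
    rw [D_sqrt (dV hinner hpV) (hinnerpos (0, 0)).ne' v]
    have hz : fderiv ℝ (fun q => 1 + pdx f q ^ 2 + pdy f q ^ 2) (0, 0) v = 0 := by
      rw [D_add ((differentiableAt_const (1 : ℝ)).fun_add ((dV hAx hpV).fun_pow 2)) ((dV hAy hpV).fun_pow 2),
        D_add (differentiableAt_const (1 : ℝ)) ((dV hAx hpV).fun_pow 2),
        D_const, D_sq (dV hAx hpV), D_sq (dV hAy hpV), hfx, hfy]
      ring
    rw [hz, zero_div]
  have hWne : W (0, 0) ≠ 0 := (hWpos _).ne'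
  have hdx1 : ∀ v : ℝ × ℝ, fderiv ℝ x1 (0, 0) v = -fderiv ℝ (pdx f) (0, 0) v := by
    intro v
    rw [hx1def, D_div (dV hAx hpV).fun_neg (dV hWV hpV) hWne v, D_neg, hW0, hdW v, hfx]
    ring
  have hdx2 : ∀ v : ℝ × ℝ, fderiv ℝ x2 (0, 0) v = -fderiv ℝ (pdy f) (0, 0) v := by
    intro v
    rw [hx2def, D_div (dV hAy hpV).fun_neg (dV hWV hpV) hWne v, D_neg, hW0, hdW v, hfy]
    ring
  have hdx3 : ∀ v : ℝ × ℝ, fderiv ℝ x3 (0, 0) v = 0 := by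
    intro v
    rw [hx3def, D_div (differentiableAt_const (1 : ℝ)) (dV hWV hpV) hWne v, D_const, hW0, hdW v]
    ring
  -- symmetry of second derivatives
  have h2f : ContDiffAt ℝ 2 f (0, 0) := (hf.contDiffAt hU).of_le (by rw [← WithTop.coe_ofNat]; exact WithTop.coe_le_coe.2 le_top)
  have h2g : ContDiffAt ℝ 2 g (0, 0) := (hg.contDiffAt hU).of_le (by rw [← WithTop.coe_ofNat]; exact WithTop.coe_le_coe.2 le_top)
  have hsymf : fderiv ℝ (pdx f) (0, 0) (0, 1) = 0 := by
    show pdy (pdx f) (0, 0) = 0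
    rw [← pdx_pdy_symm h2f]; exact hfxy
  have hsymg : fderiv ℝ (pdx g) (0, 0) (0, 1) = 0 := by
    show pdy (pdx g) (0, 0) = 0
    rw [← pdx_pdy_symm h2g]; exact hgxy
  -- the Phi map componentwise
  have hPhiFun : PhiMap f g
      = fun q => ![1 + g q, q.1 + g q * x1 q, q.2 + g q * x2 q, f q + g q * x3 q] := by
    funext q i
    rw [hx1def, hx2def, hx3def, hWdef]
    fin_cases i <;> simp [PhiMap, xiMap]
  have hPhi0 : (fun q => PhiMap f g q 0) = fun q => 1 + g q := by
    funext q; rw [hPhiFun]; simp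
  have hPhi1 : (fun q => PhiMap f g q 1) = fun q => q.1 + g q * x1 q := by
    funext q; rw [hPhiFun]; simp
  have hPhi2 : (fun q => PhiMap f g q 2) = fun q => q.2 + g q * x2 q := by
    funext q; rw [hPhiFun]; simp
  have hPhi3 : (fun q => PhiMap f g q 3) = fun q => f q + g q * x3 q := by
    funext q; rw [hPhiFun]; simp
  have hPhiD : ∀ q ∈ V, DifferentiableAt ℝ (PhiMap f g) q := by
    intro q hq
    apply differentiableAt_pi.2
    intro i
    fin_cases i
    · show DifferentiableAt ℝ (fun x => PhiMap f g x 0) q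
      rw [hPhi0]
      exact (differentiableAt_const _).add (dV hgV hq)
    · show DifferentiableAt ℝ (fun x => PhiMap f g x 1) q
      rw [hPhi1]
      exact differentiable_fst.differentiableAt.add ((dV hgV hq).mul (dV hx1V hq))
    · show DifferentiableAt ℝ (fun x => PhiMap f g x 2) q
      rw [hPhi2]
      exact differentiable_snd.differentiableAt.add ((dV hgV hq).mul (dV hx2V hq))
    · show DifferentiableAt ℝ (fun x => PhiMap f g x 3) q
      rw [hPhi3]
      exact (dV hfV hq).add ((dV hgV hq).mul (dV hx3V hq))
  -- pdx of Phi components, as functions on V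
  have hF0 : ∀ q ∈ V, pdx (PhiMap f g) q 0 = pdx g q := by
    intro q hq
    rw [show pdx (PhiMap f g) q 0 = fderiv ℝ (PhiMap f g) q (1, 0) 0 from rfl,
      D_proj (hPhiD q hq) (1, 0) 0, hPhi0,
      D_add (differentiableAt_const (1 : ℝ)) (dV hgV hq), D_const, zero_add]
    rfl
  have hF1 : ∀ q ∈ V, pdx (PhiMap f g) q 1
      = 1 + (pdx g q * x1 q + g q * pdx x1 q) := by
    intro q hq
    rw [show pdx (PhiMap f g) q 1 = fderiv ℝ (PhiMap f g) q (1, 0) 1 from rfl,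
      D_proj (hPhiD q hq) (1, 0) 1, hPhi1,
      D_add differentiable_fst.differentiableAt ((dV hgV hq).fun_mul (dV hx1V hq)),
      D_mul (dV hgV hq) (dV hx1V hq), D_fst]
    rfl
  have hF2 : ∀ q ∈ V, pdx (PhiMap f g) q 2
      = 0 + (pdx g q * x2 q + g q * pdx x2 q) := by
    intro q hq
    rw [show pdx (PhiMap f g) q 2 = fderiv ℝ (PhiMap f g) q (1, 0) 2 from rfl,
      D_proj (hPhiD q hq) (1, 0) 2, hPhi2,
      D_add differentiable_snd.differentiableAt ((dV hgV hq).fun_mul (dV hx2V hq)),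
      D_mul (dV hgV hq) (dV hx2V hq), D_snd]
    rfl
  have hF3 : ∀ q ∈ V, pdx (PhiMap f g) q 3
      = pdx f q + (pdx g q * x3 q + g q * pdx x3 q) := by
    intro q hq
    rw [show pdx (PhiMap f g) q 3 = fderiv ℝ (PhiMap f g) q (1, 0) 3 from rfl,
      D_proj (hPhiD q hq) (1, 0) 3, hPhi3,
      D_add (dV hfV hq) ((dV hgV hq).fun_mul (dV hx3V hq)),
      D_mul (dV hgV hq) (dV hx3V hq)]
    rfl
  -- pdy of Phi components
  have hG0 : ∀ q ∈ V, pdy (PhiMap f g) q 0 = pdy g q := by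
    intro q hq
    rw [show pdy (PhiMap f g) q 0 = fderiv ℝ (PhiMap f g) q (0, 1) 0 from rfl,
      D_proj (hPhiD q hq) (0, 1) 0, hPhi0,
      D_add (differentiableAt_const (1 : ℝ)) (dV hgV hq), D_const, zero_add]
    rfl
  have hG1 : ∀ q ∈ V, pdy (PhiMap f g) q 1
      = 0 + (pdy g q * x1 q + g q * pdy x1 q) := by
    intro q hq
    rw [show pdy (PhiMap f g) q 1 = fderiv ℝ (PhiMap f g) q (0, 1) 1 from rfl,
      D_proj (hPhiD q hq) (0, 1) 1, hPhi1,
      D_add differentiable_fst.differentiableAt ((dV hgV hq).fun_mul (dV hx1V hq)),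
      D_mul (dV hgV hq) (dV hx1V hq), D_fst]
    rfl
  have hG2 : ∀ q ∈ V, pdy (PhiMap f g) q 2
      = 1 + (pdy g q * x2 q + g q * pdy x2 q) := by
    intro q hq
    rw [show pdy (PhiMap f g) q 2 = fderiv ℝ (PhiMap f g) q (0, 1) 2 from rfl,
      D_proj (hPhiD q hq) (0, 1) 2, hPhi2,
      D_add differentiable_snd.differentiableAt ((dV hgV hq).fun_mul (dV hx2V hq)),
      D_mul (dV hgV hq) (dV hx2V hq), D_snd]
    rfl
  have hG3 : ∀ q ∈ V, pdy (PhiMap f g) q 3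
      = pdy f q + (pdy g q * x3 q + g q * pdy x3 q) := by
    intro q hq
    rw [show pdy (PhiMap f g) q 3 = fderiv ℝ (PhiMap f g) q (0, 1) 3 from rfl,
      D_proj (hPhiD q hq) (0, 1) 3, hPhi3,
      D_add (dV hfV hq) ((dV hgV hq).fun_mul (dV hx3V hq)),
      D_mul (dV hgV hq) (dV hx3V hq)]
    rfl
  -- values of pd Phi at the origin
  have hF0v : pdx (PhiMap f g) (0, 0) 0 = 0 := by rw [hF0 (0, 0) hpV]; exact hgx
  have hF1v : pdx (PhiMap f g) (0, 0) 1 = 1 := by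
    rw [hF1 (0, 0) hpV, hg0, hx1v, hgx]; ring
  have hF2v : pdx (PhiMap f g) (0, 0) 2 = 0 := by
    rw [hF2 (0, 0) hpV, hg0, hx2v, hgx]; ring
  have hF3v : pdx (PhiMap f g) (0, 0) 3 = 0 := by
    rw [hF3 (0, 0) hpV, hg0, hx3v, hfx, hgx]; ring
  have hG0v : pdy (PhiMap f g) (0, 0) 0 = 0 := by rw [hG0 (0, 0) hpV]; exact hgy
  have hG1v : pdy (PhiMap f g) (0, 0) 1 = 0 := by
    rw [hG1 (0, 0) hpV, hg0, hx1v, hgy]; ring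
  have hG2v : pdy (PhiMap f g) (0, 0) 2 = 1 := by
    rw [hG2 (0, 0) hpV, hg0, hx2v, hgy]; ring
  have hG3v : pdy (PhiMap f g) (0, 0) 3 = 0 := by
    rw [hG3 (0, 0) hpV, hg0, hx3v, hfy, hgy]; ring
  -- xi componentwise
  have hxiEq : ∀ q, xiMap f q = ![1, x1 q, x2 q, x3 q] := by
    intro q; rw [hx1def, hx2def, hx3def, hWdef]; rfl
  -- eventually-equal descriptions of the pd Phi components near the origin
  have hEF0 : (fun q => pdx (PhiMap f g) q 0) =ᶠ[nhds ((0, 0) : ℝ × ℝ)] pdx g := by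
    filter_upwards [hVn] with q hq; exact hF0 q hq
  have hEF1 : (fun q => pdx (PhiMap f g) q 1) =ᶠ[nhds ((0, 0) : ℝ × ℝ)]
      (fun q => 1 + (pdx g q * x1 q + g q * pdx x1 q)) := by
    filter_upwards [hVn] with q hq; exact hF1 q hq
  have hEF2 : (fun q => pdx (PhiMap f g) q 2) =ᶠ[nhds ((0, 0) : ℝ × ℝ)]
      (fun q => 0 + (pdx g q * x2 q + g q * pdx x2 q)) := by
    filter_upwards [hVn] with q hq; exact hF2 q hq
  have hEF3 : (fun q => pdx (PhiMap f g) q 3) =ᶠ[nhds ((0, 0) : ℝ × ℝ)]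
      (fun q => pdx f q + (pdx g q * x3 q + g q * pdx x3 q)) := by
    filter_upwards [hVn] with q hq; exact hF3 q hq
  have hEG0 : (fun q => pdy (PhiMap f g) q 0) =ᶠ[nhds ((0, 0) : ℝ × ℝ)] pdy g := by
    filter_upwards [hVn] with q hq; exact hG0 q hq
  have hEG1 : (fun q => pdy (PhiMap f g) q 1) =ᶠ[nhds ((0, 0) : ℝ × ℝ)]
      (fun q => 0 + (pdy g q * x1 q + g q * pdy x1 q)) := by
    filter_upwards [hVn] with q hq; exact hG1 q hq
  have hEG2 : (fun q => pdy (PhiMap f g) q 2) =ᶠ[nhds ((0, 0) : ℝ × ℝ)]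
      (fun q => 1 + (pdy g q * x2 q + g q * pdy x2 q)) := by
    filter_upwards [hVn] with q hq; exact hG2 q hq
  have hEG3 : (fun q => pdy (PhiMap f g) q 3) =ᶠ[nhds ((0, 0) : ℝ × ℝ)]
      (fun q => pdy f q + (pdy g q * x3 q + g q * pdy x3 q)) := by
    filter_upwards [hVn] with q hq; exact hG3 q hq
  -- differentiability of the pd Phi components at the origin
  have hDF0 : DifferentiableAt ℝ (fun q => pdx (PhiMap f g) q 0) (0, 0) :=
    hEF0.differentiableAt_iff.2 (dV hCx hpV)
  have hDF1 : DifferentiableAt ℝ (fun q => pdx (PhiMap f g) q 1) (0, 0) :=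
    hEF1.differentiableAt_iff.2 ((differentiableAt_const _).add
      (((dV hCx hpV).mul (dV hx1V hpV)).add ((dV hgV hpV).mul (dV hPx1 hpV))))
  have hDF2 : DifferentiableAt ℝ (fun q => pdx (PhiMap f g) q 2) (0, 0) :=
    hEF2.differentiableAt_iff.2 ((differentiableAt_const _).add
      (((dV hCx hpV).mul (dV hx2V hpV)).add ((dV hgV hpV).mul (dV hPx2 hpV))))
  have hDF3 : DifferentiableAt ℝ (fun q => pdx (PhiMap f g) q 3) (0, 0) :=
    hEF3.differentiableAt_iff.2 ((dV hAx hpV).add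
      (((dV hCx hpV).mul (dV hx3V hpV)).add ((dV hgV hpV).mul (dV hPx3 hpV))))
  have hDG0 : DifferentiableAt ℝ (fun q => pdy (PhiMap f g) q 0) (0, 0) :=
    hEG0.differentiableAt_iff.2 (dV hCy hpV)
  have hDG1 : DifferentiableAt ℝ (fun q => pdy (PhiMap f g) q 1) (0, 0) :=
    hEG1.differentiableAt_iff.2 ((differentiableAt_const _).add
      (((dV hCy hpV).mul (dV hx1V hpV)).add ((dV hgV hpV).mul (dV hPy1 hpV))))
  have hDG2 : DifferentiableAt ℝ (fun q => pdy (PhiMap f g) q 2) (0, 0) :=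
    hEG2.differentiableAt_iff.2 ((differentiableAt_const _).add
      (((dV hCy hpV).mul (dV hx2V hpV)).add ((dV hgV hpV).mul (dV hPy2 hpV))))
  have hDG3 : DifferentiableAt ℝ (fun q => pdy (PhiMap f g) q 3) (0, 0) :=
    hEG3.differentiableAt_iff.2 ((dV hAy hpV).add
      (((dV hCy hpV).mul (dV hx3V hpV)).add ((dV hgV hpV).mul (dV hPy3 hpV))))
  -- useful particular values
  have hpxx1 : pdx x1 (0, 0) = -fderiv ℝ (pdx f) (0, 0) (1, 0) := hdx1 (1, 0)
  have hpxx2 : pdx x2 (0, 0) = 0 := by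
    show fderiv ℝ x2 (0, 0) (1, 0) = 0
    rw [hdx2 (1, 0), show fderiv ℝ (pdy f) (0, 0) (1, 0) = 0 from hfxy]; ring
  have hpxx3 : pdx x3 (0, 0) = 0 := hdx3 (1, 0)
  have hpyx1 : pdy x1 (0, 0) = 0 := by
    show fderiv ℝ x1 (0, 0) (0, 1) = 0
    rw [hdx1 (0, 1), hsymf]; ring
  have hpyx2 : pdy x2 (0, 0) = -fderiv ℝ (pdy f) (0, 0) (0, 1) := hdx2 (0, 1)
  have hpyx3 : pdy x3 (0, 0) = 0 := hdx3 (0, 1)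
  -- derivatives of the pd Phi components at the origin
  have hdF0 : ∀ v : ℝ × ℝ, fderiv ℝ (fun q => pdx (PhiMap f g) q 0) (0, 0) v
      = fderiv ℝ (pdx g) (0, 0) v := fun v => by rw [hEF0.fderiv_eq]
  have hdF1 : ∀ v : ℝ × ℝ, fderiv ℝ g (0, 0) v = 0 →
      fderiv ℝ (fun q => pdx (PhiMap f g) q 1) (0, 0) v = 0 := by
    intro v hv
    rw [hEF1.fderiv_eq,
      D_add (differentiableAt_const (1 : ℝ))
        (((dV hCx hpV).fun_mul (dV hx1V hpV)).fun_add ((dV hgV hpV).fun_mul (dV hPx1 hpV))),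
      D_const,
      D_add ((dV hCx hpV).fun_mul (dV hx1V hpV)) ((dV hgV hpV).fun_mul (dV hPx1 hpV)),
      D_mul (dV hCx hpV) (dV hx1V hpV), D_mul (dV hgV hpV) (dV hPx1 hpV),
      hx1v, hg0, hgx, hv]
    ring
  have hdF2 : ∀ v : ℝ × ℝ, fderiv ℝ g (0, 0) v = 0 →
      fderiv ℝ (fun q => pdx (PhiMap f g) q 2) (0, 0) v = 0 := by
    intro v hv
    rw [hEF2.fderiv_eq,
      D_add (differentiableAt_const (0 : ℝ))
        (((dV hCx hpV).fun_mul (dV hx2V hpV)).fun_add ((dV hgV hpV).fun_mul (dV hPx2 hpV))),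
      D_const,
      D_add ((dV hCx hpV).fun_mul (dV hx2V hpV)) ((dV hgV hpV).fun_mul (dV hPx2 hpV)),
      D_mul (dV hCx hpV) (dV hx2V hpV), D_mul (dV hgV hpV) (dV hPx2 hpV),
      hx2v, hg0, hgx, hv]
    ring
  have hdF3 : ∀ v : ℝ × ℝ, fderiv ℝ g (0, 0) v = 0 →
      fderiv ℝ (fun q => pdx (PhiMap f g) q 3) (0, 0) v
      = fderiv ℝ (pdx f) (0, 0) v + fderiv ℝ (pdx g) (0, 0) v := by
    intro v hv
    rw [hEF3.fderiv_eq,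
      D_add (dV hAx hpV)
        (((dV hCx hpV).fun_mul (dV hx3V hpV)).fun_add ((dV hgV hpV).fun_mul (dV hPx3 hpV))),
      D_add ((dV hCx hpV).fun_mul (dV hx3V hpV)) ((dV hgV hpV).fun_mul (dV hPx3 hpV)),
      D_mul (dV hCx hpV) (dV hx3V hpV), D_mul (dV hgV hpV) (dV hPx3 hpV),
      hx3v, hg0, hgx, hv]
    ring
  have hdG0 : ∀ v : ℝ × ℝ, fderiv ℝ (fun q => pdy (PhiMap f g) q 0) (0, 0) v
      = fderiv ℝ (pdy g) (0, 0) v := fun v => by rw [hEG0.fderiv_eq]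
  have hdG1 : ∀ v : ℝ × ℝ, fderiv ℝ g (0, 0) v = 0 →
      fderiv ℝ (fun q => pdy (PhiMap f g) q 1) (0, 0) v = 0 := by
    intro v hv
    rw [hEG1.fderiv_eq,
      D_add (differentiableAt_const (0 : ℝ))
        (((dV hCy hpV).fun_mul (dV hx1V hpV)).fun_add ((dV hgV hpV).fun_mul (dV hPy1 hpV))),
      D_const,
      D_add ((dV hCy hpV).fun_mul (dV hx1V hpV)) ((dV hgV hpV).fun_mul (dV hPy1 hpV)),
      D_mul (dV hCy hpV) (dV hx1V hpV), D_mul (dV hgV hpV) (dV hPy1 hpV),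
      hx1v, hg0, hgy, hv]
    ring
  have hdG2 : ∀ v : ℝ × ℝ, fderiv ℝ g (0, 0) v = 0 →
      fderiv ℝ (fun q => pdy (PhiMap f g) q 2) (0, 0) v = 0 := by
    intro v hv
    rw [hEG2.fderiv_eq,
      D_add (differentiableAt_const (1 : ℝ))
        (((dV hCy hpV).fun_mul (dV hx2V hpV)).fun_add ((dV hgV hpV).fun_mul (dV hPy2 hpV))),
      D_const,
      D_add ((dV hCy hpV).fun_mul (dV hx2V hpV)) ((dV hgV hpV).fun_mul (dV hPy2 hpV)),
      D_mul (dV hCy hpV) (dV hx2V hpV), D_mul (dV hgV hpV) (dV hPy2 hpV),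
      hx2v, hg0, hgy, hv]
    ring
  have hdG3 : ∀ v : ℝ × ℝ, fderiv ℝ g (0, 0) v = 0 →
      fderiv ℝ (fun q => pdy (PhiMap f g) q 3) (0, 0) v
      = fderiv ℝ (pdy f) (0, 0) v + fderiv ℝ (pdy g) (0, 0) v := by
    intro v hv
    rw [hEG3.fderiv_eq,
      D_add (dV hAy hpV)
        (((dV hCy hpV).fun_mul (dV hx3V hpV)).fun_add ((dV hgV hpV).fun_mul (dV hPy3 hpV))),
      D_add ((dV hCy hpV).fun_mul (dV hx3V hpV)) ((dV hgV hpV).fun_mul (dV hPy3 hpV)),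
      D_mul (dV hCy hpV) (dV hx3V hpV), D_mul (dV hgV hpV) (dV hPy3 hpV),
      hx3v, hg0, hgy, hv]
    ring
  -- eta and its components
  have hetaD : DifferentiableAt ℝ η (0, 0) := (hη.contDiffAt hU).differentiableAt (by norm_num)
  have hetaiD : ∀ i : Fin 4, DifferentiableAt ℝ (fun q => η q i) (0, 0) :=
    fun i => differentiableAt_pi.1 hetaD i
  -- the workhorse: differentiating a Minkowski relation at the origin
  have mainD : ∀ (z0 z1 z2 z3 : ℝ × ℝ → ℝ) (c : ℝ) (v : ℝ × ℝ),
      DifferentiableAt ℝ z0 (0, 0) → DifferentiableAt ℝ z1 (0, 0) →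
      DifferentiableAt ℝ z2 (0, 0) → DifferentiableAt ℝ z3 (0, 0) →
      (∀ q ∈ V, -(η q 0 * z0 q) + η q 1 * z1 q + η q 2 * z2 q + η q 3 * z3 q = c) →
      -(fderiv ℝ (fun q => η q 0) (0, 0) v * z0 (0, 0) + η (0, 0) 0 * fderiv ℝ z0 (0, 0) v)
        + (fderiv ℝ (fun q => η q 1) (0, 0) v * z1 (0, 0) + η (0, 0) 1 * fderiv ℝ z1 (0, 0) v)
        + (fderiv ℝ (fun q => η q 2) (0, 0) v * z2 (0, 0) + η (0, 0) 2 * fderiv ℝ z2 (0, 0) v)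
        + (fderiv ℝ (fun q => η q 3) (0, 0) v * z3 (0, 0) + η (0, 0) 3 * fderiv ℝ z3 (0, 0) v)
        = 0 := by
    intro z0 z1 z2 z3 c v hz0 hz1 hz2 hz3 hco
    have hEq : (fun q => -(η q 0 * z0 q) + η q 1 * z1 q + η q 2 * z2 q + η q 3 * z3 q)
        =ᶠ[nhds ((0, 0) : ℝ × ℝ)] fun _ => c := by
      filter_upwards [hVn] with q hq
      exact hco q hq
    have h0 : fderiv ℝ
        (fun q => -(η q 0 * z0 q) + η q 1 * z1 q + η q 2 * z2 q + η q 3 * z3 q) (0, 0) v = 0 := by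
      rw [hEq.fderiv_eq, fderiv_const_apply]; rfl
    have expand : fderiv ℝ
        (fun q => -(η q 0 * z0 q) + η q 1 * z1 q + η q 2 * z2 q + η q 3 * z3 q) (0, 0) v
        = -(fderiv ℝ (fun q => η q 0) (0, 0) v * z0 (0, 0) + η (0, 0) 0 * fderiv ℝ z0 (0, 0) v)
        + (fderiv ℝ (fun q => η q 1) (0, 0) v * z1 (0, 0) + η (0, 0) 1 * fderiv ℝ z1 (0, 0) v)
        + (fderiv ℝ (fun q => η q 2) (0, 0) v * z2 (0, 0) + η (0, 0) 2 * fderiv ℝ z2 (0, 0) v)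
        + (fderiv ℝ (fun q => η q 3) (0, 0) v * z3 (0, 0) + η (0, 0) 3 * fderiv ℝ z3 (0, 0) v) := by
      rw [D_add ((((hetaiD 0).fun_mul hz0).fun_neg.fun_add ((hetaiD 1).fun_mul hz1)).fun_add ((hetaiD 2).fun_mul hz2))
          ((hetaiD 3).fun_mul hz3),
        D_add (((hetaiD 0).fun_mul hz0).fun_neg.fun_add ((hetaiD 1).fun_mul hz1)) ((hetaiD 2).fun_mul hz2),
        D_add ((hetaiD 0).fun_mul hz0).fun_neg ((hetaiD 1).fun_mul hz1),
        D_neg, D_mul (hetaiD 0) hz0, D_mul (hetaiD 1) hz1, D_mul (hetaiD 2) hz2,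
        D_mul (hetaiD 3) hz3]
    exact expand.symm.trans h0
  -- the four relations in component form on V
  have hco1 : ∀ q ∈ V, -(η q 0 * 1) + η q 1 * x1 q + η q 2 * x2 q + η q 3 * x3 q = 1 := by
    intro q hq
    have h := h1 q (hVU hq)
    rw [hxiEq q] at h
    simpa [mink] using h
  have hco2 : ∀ q ∈ V,
      -(η q 0 * η q 0) + η q 1 * η q 1 + η q 2 * η q 2 + η q 3 * η q 3 = 0 :=
    fun q hq => h2 q (hVU hq)
  have hco3 : ∀ q ∈ V, -(η q 0 * pdx (PhiMap f g) q 0) + η q 1 * pdx (PhiMap f g) q 1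
      + η q 2 * pdx (PhiMap f g) q 2 + η q 3 * pdx (PhiMap f g) q 3 = 0 :=
    fun q hq => h3 q (hVU hq)
  have hco4 : ∀ q ∈ V, -(η q 0 * pdy (PhiMap f g) q 0) + η q 1 * pdy (PhiMap f g) q 1
      + η q 2 * pdy (PhiMap f g) q 2 + η q 3 * pdy (PhiMap f g) q 3 = 0 :=
    fun q hq => h4 q (hVU hq)
  -- point values of eta at the origin
  have P1 := hco1 (0, 0) hpV
  rw [hx1v, hx2v, hx3v] at P1
  have P2 := hco2 (0, 0) hpV
  have P3 := hco3 (0, 0) hpV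
  rw [hF0v, hF1v, hF2v, hF3v] at P3
  have P4 := hco4 (0, 0) hpV
  rw [hG0v, hG1v, hG2v, hG3v] at P4
  have he1 : η (0, 0) 1 = 0 := by linarith only [P3]
  have he2 : η (0, 0) 2 = 0 := by linarith only [P4]
  rw [he1, he2] at P2
  have hdiffe : η (0, 0) 3 - η (0, 0) 0 = 1 := by linarith only [P1]
  have hprod : (η (0, 0) 3 - η (0, 0) 0) * (η (0, 0) 3 + η (0, 0) 0) = 0 := by
    linear_combination P2
  rw [hdiffe, one_mul] at hprod
  have he3 : η (0, 0) 3 = 1 / 2 := by linarith only [hprod, hdiffe]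
  have he0 : η (0, 0) 0 = -(1 / 2) := by linarith only [hprod, hdiffe]
  -- converted second-order hypotheses
  have Hfxx : fderiv ℝ (pdx f) (0, 0) (1, 0)
      = 2 * (k - fderiv ℝ (pdx g) (0, 0) (1, 0)) := hfxx
  have Hfyy : fderiv ℝ (pdy f) (0, 0) (0, 1)
      = 2 * (k - fderiv ℝ (pdy g) (0, 0) (0, 1)) := hfyy
  have Hfxy : fderiv ℝ (pdy f) (0, 0) (1, 0) = 0 := hfxy
  have Hgxy : fderiv ℝ (pdy g) (0, 0) (1, 0) = 0 := hgxy
  have Hgx : fderiv ℝ g (0, 0) (1, 0) = 0 := hgx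
  have Hgy : fderiv ℝ g (0, 0) (0, 1) = 0 := hgy
  -- the eight differentiated relations
  have E1x := mainD (fun _ => (1 : ℝ)) x1 x2 x3 1 (1, 0) (differentiableAt_const 1)
    (dV hx1V hpV) (dV hx2V hpV) (dV hx3V hpV) hco1
  beta_reduce at E1x
  rw [D_const, hx1v, hx2v, hx3v, hdx3, he0, he1, he2, he3] at E1x
  have E1y := mainD (fun _ => (1 : ℝ)) x1 x2 x3 1 (0, 1) (differentiableAt_const 1)
    (dV hx1V hpV) (dV hx2V hpV) (dV hx3V hpV) hco1
  beta_reduce at E1y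
  rw [D_const, hx1v, hx2v, hx3v, hdx3, he0, he1, he2, he3] at E1y
  have E2x := mainD (fun q => η q 0) (fun q => η q 1) (fun q => η q 2) (fun q => η q 3) 0 (1, 0)
    (hetaiD 0) (hetaiD 1) (hetaiD 2) (hetaiD 3) hco2
  beta_reduce at E2x
  rw [he0, he1, he2, he3] at E2x
  have E2y := mainD (fun q => η q 0) (fun q => η q 1) (fun q => η q 2) (fun q => η q 3) 0 (0, 1)
    (hetaiD 0) (hetaiD 1) (hetaiD 2) (hetaiD 3) hco2
  beta_reduce at E2y
  rw [he0, he1, he2, he3] at E2y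
  have E3x := mainD (fun q => pdx (PhiMap f g) q 0) (fun q => pdx (PhiMap f g) q 1)
    (fun q => pdx (PhiMap f g) q 2) (fun q => pdx (PhiMap f g) q 3) 0 (1, 0)
    hDF0 hDF1 hDF2 hDF3 hco3
  beta_reduce at E3x
  rw [hF0v, hF1v, hF2v, hF3v, hdF0, hdF1 (1, 0) Hgx, hdF2 (1, 0) Hgx, hdF3 (1, 0) Hgx,
    he0, he1, he2, he3, Hfxx] at E3x
  have E3y := mainD (fun q => pdx (PhiMap f g) q 0) (fun q => pdx (PhiMap f g) q 1)
    (fun q => pdx (PhiMap f g) q 2) (fun q => pdx (PhiMap f g) q 3) 0 (0, 1)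
    hDF0 hDF1 hDF2 hDF3 hco3
  beta_reduce at E3y
  rw [hF0v, hF1v, hF2v, hF3v, hdF0, hdF1 (0, 1) Hgy, hdF2 (0, 1) Hgy, hdF3 (0, 1) Hgy,
    he0, he1, he2, he3, hsymf, hsymg] at E3y
  have E4x := mainD (fun q => pdy (PhiMap f g) q 0) (fun q => pdy (PhiMap f g) q 1)
    (fun q => pdy (PhiMap f g) q 2) (fun q => pdy (PhiMap f g) q 3) 0 (1, 0)
    hDG0 hDG1 hDG2 hDG3 hco4
  beta_reduce at E4x
  rw [hG0v, hG1v, hG2v, hG3v, hdG0, hdG1 (1, 0) Hgx, hdG2 (1, 0) Hgx, hdG3 (1, 0) Hgx,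
    he0, he1, he2, he3, Hfxy, Hgxy] at E4x
  have E4y := mainD (fun q => pdy (PhiMap f g) q 0) (fun q => pdy (PhiMap f g) q 1)
    (fun q => pdy (PhiMap f g) q 2) (fun q => pdy (PhiMap f g) q 3) 0 (0, 1)
    hDG0 hDG1 hDG2 hDG3 hco4
  beta_reduce at E4y
  rw [hG0v, hG1v, hG2v, hG3v, hdG0, hdG1 (0, 1) Hgy, hdG2 (0, 1) Hgy, hdG3 (0, 1) Hgy,
    he0, he1, he2, he3, Hfyy] at E4y
  -- solve for the derivatives of eta
  have ha0 : fderiv ℝ (fun q => η q 0) (0, 0) (1, 0) = 0 := by linarith only [E1x, E2x]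
  have ha3 : fderiv ℝ (fun q => η q 3) (0, 0) (1, 0) = 0 := by linarith only [E1x, E2x]
  have ha1 : fderiv ℝ (fun q => η q 1) (0, 0) (1, 0) = -k := by linarith only [E3x]
  have ha2 : fderiv ℝ (fun q => η q 2) (0, 0) (1, 0) = 0 := by linarith only [E4x]
  have hb0 : fderiv ℝ (fun q => η q 0) (0, 0) (0, 1) = 0 := by linarith only [E1y, E2y]
  have hb3 : fderiv ℝ (fun q => η q 3) (0, 0) (0, 1) = 0 := by linarith only [E1y, E2y]
  have hb1 : fderiv ℝ (fun q => η q 1) (0, 0) (0, 1) = 0 := by linarith only [E3y]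
  have hb2 : fderiv ℝ (fun q => η q 2) (0, 0) (0, 1) = -k := by linarith only [E4y]
  -- assemble
  refine ⟨?_, ?_, ?_⟩
  · funext i
    fin_cases i
    · show η (0, 0) 0 = -(1 / 2); exact he0
    · show η (0, 0) 1 = 0; exact he1
    · show η (0, 0) 2 = 0; exact he2
    · show η (0, 0) 3 = 1 / 2; exact he3
  · funext i
    fin_cases i
    · show fderiv ℝ η (0, 0) (1, 0) 0 = 0
      rw [D_proj hetaD (1, 0) 0]; exact ha0
    · show fderiv ℝ η (0, 0) (1, 0) 1 = -k
      rw [D_proj hetaD (1, 0) 1]; exact ha1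
    · show fderiv ℝ η (0, 0) (1, 0) 2 = 0
      rw [D_proj hetaD (1, 0) 2]; exact ha2
    · show fderiv ℝ η (0, 0) (1, 0) 3 = 0
      rw [D_proj hetaD (1, 0) 3]; exact ha3
  · funext i
    fin_cases i
    · show fderiv ℝ η (0, 0) (0, 1) 0 = 0
      rw [D_proj hetaD (0, 1) 0]; exact hb0
    · show fderiv ℝ η (0, 0) (0, 1) 1 = 0
      rw [D_proj hetaD (0, 1) 1]; exact hb1
    · show fderiv ℝ η (0, 0) (0, 1) 2 = -k
      rw [D_proj hetaD (0, 1) 2]; exact hb2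
    · show fderiv ℝ η (0, 0) (0, 1) 3 = 0
      rw [D_proj hetaD (0, 1) 3]; exact hb3

end
end

section
/- Let k, a, b, c ∈ ℝ and assume g(0,0) = g_x(0,0) = g_y(0,0) = 0, g_{xx}(0,0) = g_{yy}(0,0) = k + 1/2, g_{xy}(0,0) = 0, g_{xxy}(0,0) = 0, g_{xxx}(0,0) = a, g_{xyy}(0,0) = b, g_{yyy}(0,0) = c. Let η be a C¹ map from a neighbourhood of the origin to ℝ⁴ with ⟨η, ξ⟩ = 1, ⟨η, η⟩ = 0, ⟨η, Φ_x⟩ = ⟨η, Φ_y⟩ = 0. Then A, B, C vanish at the origin and ∇A(0,0) = (0, b), ∇B(0,0) = (a − b, −c), ∇C(0,0) = (0, −b); i.e. the 1-jet of the differential equation of η-principal curvature lines is b y dy² + ((a − b)x − c y)dx dy − b y dx². -/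
noncomputable section

/-- First fundamental form coefficient `E = ⟨Φ_x, Φ_x⟩`. -/
def EcoefP (Φ : ℝ × ℝ → (Fin 4 → ℝ)) (p : ℝ × ℝ) : ℝ := mink (pdx Φ p) (pdx Φ p)

/-- First fundamental form coefficient `F = ⟨Φ_x, Φ_y⟩`. -/
def FcoefP (Φ : ℝ × ℝ → (Fin 4 → ℝ)) (p : ℝ × ℝ) : ℝ := mink (pdx Φ p) (pdy Φ p)

/-- First fundamental form coefficient `G = ⟨Φ_y, Φ_y⟩`. -/
def GcoefP (Φ : ℝ × ℝ → (Fin 4 → ℝ)) (p : ℝ × ℝ) : ℝ := mink (pdy Φ p) (pdy Φ p)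

/-- Screen second fundamental form coefficient `e_η = ⟨Φ_xx, η⟩`. -/
def eEtaP (Φ η : ℝ × ℝ → (Fin 4 → ℝ)) (p : ℝ × ℝ) : ℝ := mink (pdx (pdx Φ) p) (η p)

/-- Screen second fundamental form coefficient `f_η = ⟨Φ_xy, η⟩`. -/
def fEtaP (Φ η : ℝ × ℝ → (Fin 4 → ℝ)) (p : ℝ × ℝ) : ℝ := mink (pdx (pdy Φ) p) (η p)

/-- Screen second fundamental form coefficient `g_η = ⟨Φ_yy, η⟩`. -/
def gEtaP (Φ η : ℝ × ℝ → (Fin 4 → ℝ)) (p : ℝ × ℝ) : ℝ := mink (pdy (pdy Φ) p) (η p)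

/-- Coefficient `A = f_η G − g_η F` of the equation of η-principal curvature lines. -/
def AcoefP (Φ η : ℝ × ℝ → (Fin 4 → ℝ)) (p : ℝ × ℝ) : ℝ :=
  fEtaP Φ η p * GcoefP Φ p - gEtaP Φ η p * FcoefP Φ p

/-- Coefficient `B = e_η G − g_η E` of the equation of η-principal curvature lines. -/
def BcoefP (Φ η : ℝ × ℝ → (Fin 4 → ℝ)) (p : ℝ × ℝ) : ℝ :=
  eEtaP Φ η p * GcoefP Φ p - gEtaP Φ η p * EcoefP Φ p

/-- Coefficient `C = e_η F − f_η E` of the equation of η-principal curvature lines. -/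
def CcoefP (Φ η : ℝ × ℝ → (Fin 4 → ℝ)) (p : ℝ × ℝ) : ℝ :=
  eEtaP Φ η p * FcoefP Φ p - fEtaP Φ η p * EcoefP Φ p

/-- The null vector field `ξ(x,y) = (1, x, y, √(1 − x² − y²))` on the light cone `Λ³`. -/
def xiCone (p : ℝ × ℝ) : Fin 4 → ℝ :=
  ![1, p.1, p.2, Real.sqrt (1 - p.1 ^ 2 - p.2 ^ 2)]

/-- The parametrization `Φ(x,y) = (1 + g(x,y))·(1, x, y, √(1 − x² − y²))` of a surface
in the light cone `Λ³ ⊂ ℝ⁴₁`. -/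
def PhiCone (g : ℝ × ℝ → ℝ) (p : ℝ × ℝ) : Fin 4 → ℝ := (1 + g p) • xiCone p


open Filter Topology

namespace Aux

variable {f u : ℝ × ℝ → ℝ} {p : ℝ × ℝ}

theorem pdx_congr (h : f =ᶠ[𝓝 p] u) : pdx f p = pdx u p := by
  unfold pdx; rw [h.fderiv_eq]

theorem pdy_congr (h : f =ᶠ[𝓝 p] u) : pdy f p = pdy u p := by
  unfold pdy; rw [h.fderiv_eq]

theorem pdx_const (c : ℝ) : pdx (fun _ => c) p = 0 := by
  simp [pdx]
theorem pdy_const (c : ℝ) : pdy (fun _ => c) p = 0 := by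
  simp [pdy]

theorem pdx_fst : pdx (fun q : ℝ × ℝ => q.1) p = 1 := by
  simp [pdx, fderiv_fst]
theorem pdy_fst : pdy (fun q : ℝ × ℝ => q.1) p = 0 := by
  simp [pdy, fderiv_fst]
theorem pdx_snd : pdx (fun q : ℝ × ℝ => q.2) p = 0 := by
  simp [pdx, fderiv_snd]
theorem pdy_snd : pdy (fun q : ℝ × ℝ => q.2) p = 1 := by
  simp [pdy, fderiv_snd]

theorem pdx_add (hf : DifferentiableAt ℝ f p) (hu : DifferentiableAt ℝ u p) :
    pdx (fun q => f q + u q) p = pdx f p + pdx u p := by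
  simp [pdx, fderiv_fun_add hf hu]
theorem pdy_add (hf : DifferentiableAt ℝ f p) (hu : DifferentiableAt ℝ u p) :
    pdy (fun q => f q + u q) p = pdy f p + pdy u p := by
  simp [pdy, fderiv_fun_add hf hu]
theorem pdx_sub (hf : DifferentiableAt ℝ f p) (hu : DifferentiableAt ℝ u p) :
    pdx (fun q => f q - u q) p = pdx f p - pdx u p := by
  simp [pdx, fderiv_fun_sub hf hu]
theorem pdy_sub (hf : DifferentiableAt ℝ f p) (hu : DifferentiableAt ℝ u p) :
    pdy (fun q => f q - u q) p = pdy f p - pdy u p := by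
  simp [pdy, fderiv_fun_sub hf hu]
theorem pdx_neg : pdx (fun q => -f q) p = -pdx f p := by
  simp [pdx, fderiv_neg]
theorem pdy_neg : pdy (fun q => -f q) p = -pdy f p := by
  simp [pdy, fderiv_neg]
theorem pdx_mul (hf : DifferentiableAt ℝ f p) (hu : DifferentiableAt ℝ u p) :
    pdx (fun q => f q * u q) p = pdx f p * u p + f p * pdx u p := by
  simp [pdx, fderiv_fun_mul hf hu]; ring
theorem pdy_mul (hf : DifferentiableAt ℝ f p) (hu : DifferentiableAt ℝ u p) :
    pdy (fun q => f q * u q) p = pdy f p * u p + f p * pdy u p := by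
  simp [pdy, fderiv_fun_mul hf hu]; ring
theorem fderiv_inv_comp (hf : DifferentiableAt ℝ f p) (h0 : f p ≠ 0) (v : ℝ × ℝ) :
    fderiv ℝ (fun q => (f q)⁻¹) p v = -(fderiv ℝ f p v / (f p) ^ 2) := by
  have hc : fderiv ℝ (fun q => (f q)⁻¹) p
      = (fderiv ℝ Inv.inv (f p)).comp (fderiv ℝ f p) :=
    fderiv_comp (x := p) (differentiableAt_inv h0) hf
  rw [hc, fderiv_inv' h0]
  simp [ContinuousLinearMap.comp_apply, div_eq_mul_inv, pow_two, mul_inv]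
  ring
theorem pdx_inv (hf : DifferentiableAt ℝ f p) (h0 : f p ≠ 0) :
    pdx (fun q => (f q)⁻¹) p = -(pdx f p / (f p) ^ 2) :=
  fderiv_inv_comp hf h0 _
theorem pdy_inv (hf : DifferentiableAt ℝ f p) (h0 : f p ≠ 0) :
    pdy (fun q => (f q)⁻¹) p = -(pdy f p / (f p) ^ 2) :=
  fderiv_inv_comp hf h0 _

/-- smoothness of pdx -/
theorem contDiffAt_pdx (hf : ContDiffAt ℝ (⊤ : ℕ∞) f p) : ContDiffAt ℝ (⊤ : ℕ∞) (pdx f) p := by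
  have h1 : ContDiffAt ℝ (⊤ : ℕ∞) (fderiv ℝ f) p := hf.fderiv_right (m := (⊤ : ℕ∞)) (by simp)
  exact (ContinuousLinearMap.apply ℝ ℝ ((1:ℝ), (0:ℝ))).contDiff.contDiffAt.comp p h1

theorem contDiffAt_pdy (hf : ContDiffAt ℝ (⊤ : ℕ∞) f p) : ContDiffAt ℝ (⊤ : ℕ∞) (pdy f) p := by
  have h1 : ContDiffAt ℝ (⊤ : ℕ∞) (fderiv ℝ f) p := hf.fderiv_right (m := (⊤ : ℕ∞)) (by simp)
  exact (ContinuousLinearMap.apply ℝ ℝ ((0:ℝ), (1:ℝ))).contDiff.contDiffAt.comp p h1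

/-- symmetry of second partials -/
theorem pdx_pdy_comm (hf : ContDiffAt ℝ (⊤ : ℕ∞) f p) : pdx (pdy f) p = pdy (pdx f) p := by
  have hs : IsSymmSndFDerivAt ℝ f p := hf.isSymmSndFDerivAt (by norm_num; exact (WithTop.coe_le_coe.mpr (le_top : (2:ℕ∞) ≤ ⊤)))
  have hd : DifferentiableAt ℝ (fderiv ℝ f) p :=
    (hf.fderiv_right (m := (⊤ : ℕ∞)) (by simp)).differentiableAt (by simp)
  have e1 : ∀ v w : ℝ × ℝ, fderiv ℝ (fun q => fderiv ℝ f q v) p w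
      = fderiv ℝ (fderiv ℝ f) p w v := by
    intro v w
    rw [fderiv_clm_apply hd (differentiableAt_const v)]
    simp
  unfold pdx pdy
  rw [e1, e1, hs]


def Scone : Set (ℝ × ℝ) := {q | q.1 ^ 2 + q.2 ^ 2 < 1}

theorem isOpen_Scone : IsOpen Scone :=
  isOpen_lt (by fun_prop) continuous_const

theorem zero_mem_Scone : ((0, 0) : ℝ × ℝ) ∈ Scone := by
  simp [Scone]

def wF : ℝ × ℝ → ℝ := fun q => Real.sqrt (1 - q.1 * q.1 - q.2 * q.2)

theorem uq_pos {q : ℝ × ℝ} (hq : q ∈ Scone) : 0 < 1 - q.1 * q.1 - q.2 * q.2 := by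
  have : q.1 ^ 2 + q.2 ^ 2 < 1 := hq
  nlinarith [sq_nonneg q.1, sq_nonneg q.2]

theorem wF_pos {q : ℝ × ℝ} (hq : q ∈ Scone) : 0 < wF q :=
  Real.sqrt_pos.2 (uq_pos hq)

theorem wF_ne {q : ℝ × ℝ} (hq : q ∈ Scone) : wF q ≠ 0 := (wF_pos hq).ne'

theorem wF_zero : wF (0, 0) = 1 := by
  simp [wF]

theorem contDiffAt_wF {q : ℝ × ℝ} (hq : q ∈ Scone) : ContDiffAt ℝ (⊤ : ℕ∞) wF q := by
  have hu : ContDiffAt ℝ (⊤ : ℕ∞) (fun q : ℝ × ℝ => 1 - q.1 * q.1 - q.2 * q.2) q := by fun_prop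
  exact (Real.contDiffAt_sqrt (uq_pos hq).ne').comp q hu

theorem hasFDerivAt_wF {q : ℝ × ℝ} (hq : q ∈ Scone) :
    HasFDerivAt wF ((1 / (2 * wF q)) •
      ((0 : ℝ × ℝ →L[ℝ] ℝ)
        - (q.1 • ContinuousLinearMap.fst ℝ ℝ ℝ + q.1 • ContinuousLinearMap.fst ℝ ℝ ℝ)
        - (q.2 • ContinuousLinearMap.snd ℝ ℝ ℝ + q.2 • ContinuousLinearMap.snd ℝ ℝ ℝ))) q := by
  have h1 : HasFDerivAt (fun y : ℝ × ℝ => y.1) (ContinuousLinearMap.fst ℝ ℝ ℝ) q := hasFDerivAt_fst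
  have h2 : HasFDerivAt (fun y : ℝ × ℝ => y.2) (ContinuousLinearMap.snd ℝ ℝ ℝ) q := hasFDerivAt_snd
  have hu := ((hasFDerivAt_const (1:ℝ) q).sub (h1.mul h1)).sub (h2.mul h2)
  have hc := hu.sqrt (x := q) (uq_pos hq).ne'
  exact hc

theorem pdx_wF {q : ℝ × ℝ} (hq : q ∈ Scone) : pdx wF q = -(q.1 * (wF q)⁻¹) := by
  have h : pdx wF q = _ := congrFun (congrArg _ (hasFDerivAt_wF hq).fderiv) (1, 0)
  rw [h]
  have := wF_ne hq
  simp
  field_simp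
  ring

theorem pdy_wF {q : ℝ × ℝ} (hq : q ∈ Scone) : pdy wF q = -(q.2 * (wF q)⁻¹) := by
  have h : pdy wF q = _ := congrFun (congrArg _ (hasFDerivAt_wF hq).fderiv) (0, 1)
  rw [h]
  have := wF_ne hq
  simp
  field_simp
  ring

-- fragment to append inside namespace Aux (will assemble later)
theorem eventuallyEq_on_open {E : Type*} {f u : ℝ × ℝ → E} {s : Set (ℝ × ℝ)}
    (hs : IsOpen s) {p : ℝ × ℝ} (hp : p ∈ s) (h : ∀ q ∈ s, f q = u q) :
    f =ᶠ[nhds p] u :=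
  Filter.eventually_of_mem (hs.mem_nhds hp) h

def vF : ℝ × ℝ → ℝ := fun q => (wF q)⁻¹

theorem dW {q : ℝ × ℝ} (hq : q ∈ Scone) : DifferentiableAt ℝ wF q :=
  (contDiffAt_wF hq).differentiableAt (by simp)

theorem dV {q : ℝ × ℝ} (hq : q ∈ Scone) : DifferentiableAt ℝ vF q :=
  (dW hq).inv (wF_ne hq)

theorem vF_zero : vF (0, 0) = 1 := by simp [vF, wF]

theorem pdx_wF_zero : pdx wF (0, 0) = 0 := by
  rw [pdx_wF zero_mem_Scone]; simp

theorem pdy_wF_zero : pdy wF (0, 0) = 0 := by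
  rw [pdy_wF zero_mem_Scone]; simp

theorem pdx_vF {q : ℝ × ℝ} (hq : q ∈ Scone) : pdx vF q = q.1 * (vF q * vF q * vF q) := by
  show pdx (fun r => (wF r)⁻¹) q = _
  rw [pdx_inv (dW hq) (wF_ne hq), pdx_wF hq]
  have := wF_ne hq
  unfold vF
  field_simp

theorem pdy_vF {q : ℝ × ℝ} (hq : q ∈ Scone) : pdy vF q = q.2 * (vF q * vF q * vF q) := by
  show pdy (fun r => (wF r)⁻¹) q = _
  rw [pdy_inv (dW hq) (wF_ne hq), pdy_wF hq]
  have := wF_ne hq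
  unfold vF
  field_simp

theorem pdx_vF_zero : pdx vF (0, 0) = 0 := by rw [pdx_vF zero_mem_Scone]; simp
theorem pdy_vF_zero : pdy vF (0, 0) = 0 := by rw [pdy_vF zero_mem_Scone]; simp

def QxF : ℝ × ℝ → ℝ := fun q => q.1 * (vF q * vF q * vF q)
def QyF : ℝ × ℝ → ℝ := fun q => q.2 * (vF q * vF q * vF q)

theorem dQx {q : ℝ × ℝ} (hq : q ∈ Scone) : DifferentiableAt ℝ QxF q := by
  exact differentiableAt_fst.mul (((dV hq).mul (dV hq)).mul (dV hq))
theorem dQy {q : ℝ × ℝ} (hq : q ∈ Scone) : DifferentiableAt ℝ QyF q := by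
  exact differentiableAt_snd.mul (((dV hq).mul (dV hq)).mul (dV hq))

theorem QxF_zero : QxF (0, 0) = 0 := by simp [QxF]
theorem QyF_zero : QyF (0, 0) = 0 := by simp [QyF]

-- first derivative eventual equalities
theorem ev_pdx_wF {p : ℝ × ℝ} (hp : p ∈ Scone) : pdx wF =ᶠ[nhds p] fun r => -(r.1 * vF r) :=
  eventuallyEq_on_open isOpen_Scone hp fun q hq => pdx_wF hq
theorem ev_pdy_wF {p : ℝ × ℝ} (hp : p ∈ Scone) : pdy wF =ᶠ[nhds p] fun r => -(r.2 * vF r) :=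
  eventuallyEq_on_open isOpen_Scone hp fun q hq => pdy_wF hq

-- second derivatives on Scone
theorem pdx_pdx_wF {q : ℝ × ℝ} (hq : q ∈ Scone) :
    pdx (pdx wF) q = -(vF q + q.1 * QxF q) := by
  rw [pdx_congr (ev_pdx_wF hq)]
  have h1 : pdx (fun r : ℝ × ℝ => r.1 * vF r) q = 1 * vF q + q.1 * pdx vF q := by
    rw [pdx_mul differentiableAt_fst (dV hq), pdx_fst]
  rw [pdx_neg, h1, pdx_vF hq]
  unfold QxF; ring

theorem pdy_pdx_wF {q : ℝ × ℝ} (hq : q ∈ Scone) :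
    pdy (pdx wF) q = -(q.1 * QyF q) := by
  rw [pdy_congr (ev_pdx_wF hq)]
  have h1 : pdy (fun r : ℝ × ℝ => r.1 * vF r) q = 0 * vF q + q.1 * pdy vF q := by
    rw [pdy_mul differentiableAt_fst (dV hq), pdy_fst]
  rw [pdy_neg, h1, pdy_vF hq]
  unfold QyF; ring

theorem pdx_pdy_wF {q : ℝ × ℝ} (hq : q ∈ Scone) :
    pdx (pdy wF) q = -(q.2 * QxF q) := by
  rw [pdx_congr (ev_pdy_wF hq)]
  have h1 : pdx (fun r : ℝ × ℝ => r.2 * vF r) q = 0 * vF q + q.2 * pdx vF q := by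
    rw [pdx_mul differentiableAt_snd (dV hq), pdx_snd]
  rw [pdx_neg, h1, pdx_vF hq]
  unfold QxF; ring

theorem pdy_pdy_wF {q : ℝ × ℝ} (hq : q ∈ Scone) :
    pdy (pdy wF) q = -(vF q + q.2 * QyF q) := by
  rw [pdy_congr (ev_pdy_wF hq)]
  have h1 : pdy (fun r : ℝ × ℝ => r.2 * vF r) q = 1 * vF q + q.2 * pdy vF q := by
    rw [pdy_mul differentiableAt_snd (dV hq), pdy_snd]
  rw [pdy_neg, h1, pdy_vF hq]
  unfold QyF; ring

theorem wxx0 : pdx (pdx wF) (0, 0) = -1 := by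
  rw [pdx_pdx_wF zero_mem_Scone, vF_zero, QxF_zero]; norm_num
theorem wyx0 : pdy (pdx wF) (0, 0) = 0 := by
  rw [pdy_pdx_wF zero_mem_Scone, QyF_zero]; norm_num
theorem wxy0 : pdx (pdy wF) (0, 0) = 0 := by
  rw [pdx_pdy_wF zero_mem_Scone, QxF_zero]; norm_num
theorem wyy0 : pdy (pdy wF) (0, 0) = -1 := by
  rw [pdy_pdy_wF zero_mem_Scone, vF_zero, QyF_zero]; norm_num

-- second derivative eventual equalities at 0
theorem ev2xx : pdx (pdx wF) =ᶠ[nhds ((0,0) : ℝ × ℝ)] fun r => -(vF r + r.1 * QxF r) :=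
  eventuallyEq_on_open isOpen_Scone zero_mem_Scone fun q hq => pdx_pdx_wF hq
theorem ev2xy : pdx (pdy wF) =ᶠ[nhds ((0,0) : ℝ × ℝ)] fun r => -(r.2 * QxF r) :=
  eventuallyEq_on_open isOpen_Scone zero_mem_Scone fun q hq => pdx_pdy_wF hq
theorem ev2yy : pdy (pdy wF) =ᶠ[nhds ((0,0) : ℝ × ℝ)] fun r => -(vF r + r.2 * QyF r) :=
  eventuallyEq_on_open isOpen_Scone zero_mem_Scone fun q hq => pdy_pdy_wF hq

-- third derivatives at 0
theorem wxxx0 : pdx (pdx (pdx wF)) (0, 0) = 0 := by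
  rw [pdx_congr ev2xx, pdx_neg,
    pdx_add (dV zero_mem_Scone) (differentiableAt_fst.fun_mul (dQx zero_mem_Scone)),
    pdx_mul differentiableAt_fst (dQx zero_mem_Scone), pdx_fst, pdx_vF_zero, QxF_zero]
  norm_num
theorem wyxx0 : pdy (pdx (pdx wF)) (0, 0) = 0 := by
  rw [pdy_congr ev2xx, pdy_neg,
    pdy_add (dV zero_mem_Scone) (differentiableAt_fst.fun_mul (dQx zero_mem_Scone)),
    pdy_mul differentiableAt_fst (dQx zero_mem_Scone), pdy_fst, pdy_vF_zero, QxF_zero]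
  norm_num
theorem wxxy0 : pdx (pdx (pdy wF)) (0, 0) = 0 := by
  rw [pdx_congr ev2xy, pdx_neg,
    pdx_mul differentiableAt_snd (dQx zero_mem_Scone), pdx_snd, QxF_zero]
  norm_num
theorem wyxy0 : pdy (pdx (pdy wF)) (0, 0) = 0 := by
  rw [pdy_congr ev2xy, pdy_neg,
    pdy_mul differentiableAt_snd (dQx zero_mem_Scone), pdy_snd, QxF_zero]
  norm_num
theorem wxyy0 : pdx (pdy (pdy wF)) (0, 0) = 0 := by
  rw [pdx_congr ev2yy, pdx_neg,
    pdx_add (dV zero_mem_Scone) (differentiableAt_snd.fun_mul (dQy zero_mem_Scone)),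
    pdx_mul differentiableAt_snd (dQy zero_mem_Scone), pdx_snd, pdx_vF_zero, QyF_zero]
  norm_num
theorem wyyy0 : pdy (pdy (pdy wF)) (0, 0) = 0 := by
  rw [pdy_congr ev2yy, pdy_neg,
    pdy_add (dV zero_mem_Scone) (differentiableAt_snd.fun_mul (dQy zero_mem_Scone)),
    pdy_mul differentiableAt_snd (dQy zero_mem_Scone), pdy_snd, pdy_vF_zero, QyF_zero]
  norm_num

-- vector-valued congr
theorem pdx_congrE {E : Type*} [NormedAddCommGroup E] [NormedSpace ℝ E]
    {f u : ℝ × ℝ → E} {p : ℝ × ℝ} (h : f =ᶠ[nhds p] u) : pdx f p = pdx u p := by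
  unfold pdx; rw [h.fderiv_eq]
theorem pdy_congrE {E : Type*} [NormedAddCommGroup E] [NormedSpace ℝ E]
    {f u : ℝ × ℝ → E} {p : ℝ × ℝ} (h : f =ᶠ[nhds p] u) : pdy f p = pdy u p := by
  unfold pdy; rw [h.fderiv_eq]

theorem pdx_pi {Φ : ℝ × ℝ → Fin 4 → ℝ} {p : ℝ × ℝ}
    (h : ∀ i, DifferentiableAt ℝ (fun q => Φ q i) p) (i : Fin 4) :
    pdx Φ p i = pdx (fun q => Φ q i) p := by
  have h1 : fderiv ℝ Φ p = ContinuousLinearMap.pi (fun i => fderiv ℝ (fun q => Φ q i) p) :=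
    fderiv_pi h
  unfold pdx
  rw [h1, ContinuousLinearMap.pi_apply]

theorem pdy_pi {Φ : ℝ × ℝ → Fin 4 → ℝ} {p : ℝ × ℝ}
    (h : ∀ i, DifferentiableAt ℝ (fun q => Φ q i) p) (i : Fin 4) :
    pdy Φ p i = pdy (fun q => Φ q i) p := by
  have h1 : fderiv ℝ Φ p = ContinuousLinearMap.pi (fun i => fderiv ℝ (fun q => Φ q i) p) :=
    fderiv_pi h
  unfold pdy
  rw [h1, ContinuousLinearMap.pi_apply]

theorem ev_pdx_pi {Φ : ℝ × ℝ → Fin 4 → ℝ} {p : ℝ × ℝ}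
    (hloc : ∀ᶠ q in nhds p, ∀ i, DifferentiableAt ℝ (fun s => Φ s i) q) :
    pdx Φ =ᶠ[nhds p] fun q i => pdx (fun s => Φ s i) q :=
  hloc.mono fun q hq => funext fun i => pdx_pi hq i

theorem ev_pdy_pi {Φ : ℝ × ℝ → Fin 4 → ℝ} {p : ℝ × ℝ}
    (hloc : ∀ᶠ q in nhds p, ∀ i, DifferentiableAt ℝ (fun s => Φ s i) q) :
    pdy Φ =ᶠ[nhds p] fun q i => pdy (fun s => Φ s i) q :=
  hloc.mono fun q hq => funext fun i => pdy_pi hq i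

theorem pdx_pdx_pi {Φ : ℝ × ℝ → Fin 4 → ℝ} {p : ℝ × ℝ}
    (hloc : ∀ᶠ q in nhds p, ∀ i, DifferentiableAt ℝ (fun s => Φ s i) q)
    (hd2 : ∀ i, DifferentiableAt ℝ (fun q => pdx (fun s => Φ s i) q) p) (i : Fin 4) :
    pdx (pdx Φ) p i = pdx (pdx (fun s => Φ s i)) p := by
  have h1 : pdx (pdx Φ) p = pdx (fun q i => pdx (fun s => Φ s i) q) p :=
    pdx_congrE (ev_pdx_pi hloc)
  rw [h1, pdx_pi hd2 i]

theorem pdx_pdy_pi {Φ : ℝ × ℝ → Fin 4 → ℝ} {p : ℝ × ℝ}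
    (hloc : ∀ᶠ q in nhds p, ∀ i, DifferentiableAt ℝ (fun s => Φ s i) q)
    (hd2 : ∀ i, DifferentiableAt ℝ (fun q => pdy (fun s => Φ s i) q) p) (i : Fin 4) :
    pdx (pdy Φ) p i = pdx (pdy (fun s => Φ s i)) p := by
  have h1 : pdx (pdy Φ) p = pdx (fun q i => pdy (fun s => Φ s i) q) p :=
    pdx_congrE (ev_pdy_pi hloc)
  rw [h1, pdx_pi hd2 i]

theorem pdy_pdy_pi {Φ : ℝ × ℝ → Fin 4 → ℝ} {p : ℝ × ℝ}
    (hloc : ∀ᶠ q in nhds p, ∀ i, DifferentiableAt ℝ (fun s => Φ s i) q)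
    (hd2 : ∀ i, DifferentiableAt ℝ (fun q => pdy (fun s => Φ s i) q) p) (i : Fin 4) :
    pdy (pdy Φ) p i = pdy (pdy (fun s => Φ s i)) p := by
  have h1 : pdy (pdy Φ) p = pdy (fun q i => pdy (fun s => Φ s i) q) p :=
    pdy_congrE (ev_pdy_pi hloc)
  rw [h1, pdy_pi hd2 i]

-- product/sum workhorses
section workhorse
variable {A B C D A' B' C' D' : ℝ × ℝ → ℝ} {p : ℝ × ℝ}

theorem pdx_mul2_add (hA : DifferentiableAt ℝ A p) (hB : DifferentiableAt ℝ B p)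
    (hC : DifferentiableAt ℝ C p) (hD : DifferentiableAt ℝ D p) :
    pdx (fun q => A q * B q + C q * D q) p
      = (pdx A p * B p + A p * pdx B p) + (pdx C p * D p + C p * pdx D p) := by
  rw [pdx_add (hA.fun_mul hB) (hC.fun_mul hD), pdx_mul hA hB, pdx_mul hC hD]

theorem pdy_mul2_add (hA : DifferentiableAt ℝ A p) (hB : DifferentiableAt ℝ B p)
    (hC : DifferentiableAt ℝ C p) (hD : DifferentiableAt ℝ D p) :
    pdy (fun q => A q * B q + C q * D q) p
      = (pdy A p * B p + A p * pdy B p) + (pdy C p * D p + C p * pdy D p) := by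
  rw [pdy_add (hA.fun_mul hB) (hC.fun_mul hD), pdy_mul hA hB, pdy_mul hC hD]

theorem pdx_mul4_add (hA : DifferentiableAt ℝ A p) (hB : DifferentiableAt ℝ B p)
    (hC : DifferentiableAt ℝ C p) (hD : DifferentiableAt ℝ D p)
    (hA' : DifferentiableAt ℝ A' p) (hB' : DifferentiableAt ℝ B' p)
    (hC' : DifferentiableAt ℝ C' p) (hD' : DifferentiableAt ℝ D' p) :
    pdx (fun q => A q * B q + C q * D q + A' q * B' q + C' q * D' q) p
      = (pdx A p * B p + A p * pdx B p) + (pdx C p * D p + C p * pdx D p)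
        + (pdx A' p * B' p + A' p * pdx B' p) + (pdx C' p * D' p + C' p * pdx D' p) := by
  rw [pdx_add ((hA.fun_mul hB).fun_add (hC.fun_mul hD) |>.fun_add (hA'.fun_mul hB')) (hC'.fun_mul hD'),
    pdx_add ((hA.fun_mul hB).fun_add (hC.fun_mul hD)) (hA'.fun_mul hB'),
    pdx_add (hA.fun_mul hB) (hC.fun_mul hD),
    pdx_mul hA hB, pdx_mul hC hD, pdx_mul hA' hB', pdx_mul hC' hD']

theorem pdy_mul4_add (hA : DifferentiableAt ℝ A p) (hB : DifferentiableAt ℝ B p)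
    (hC : DifferentiableAt ℝ C p) (hD : DifferentiableAt ℝ D p)
    (hA' : DifferentiableAt ℝ A' p) (hB' : DifferentiableAt ℝ B' p)
    (hC' : DifferentiableAt ℝ C' p) (hD' : DifferentiableAt ℝ D' p) :
    pdy (fun q => A q * B q + C q * D q + A' q * B' q + C' q * D' q) p
      = (pdy A p * B p + A p * pdy B p) + (pdy C p * D p + C p * pdy D p)
        + (pdy A' p * B' p + A' p * pdy B' p) + (pdy C' p * D' p + C' p * pdy D' p) := by
  rw [pdy_add ((hA.fun_mul hB).fun_add (hC.fun_mul hD) |>.fun_add (hA'.fun_mul hB')) (hC'.fun_mul hD'),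
    pdy_add ((hA.fun_mul hB).fun_add (hC.fun_mul hD)) (hA'.fun_mul hB'),
    pdy_add (hA.fun_mul hB) (hC.fun_mul hD),
    pdy_mul hA hB, pdy_mul hC hD, pdy_mul hA' hB', pdy_mul hC' hD']

theorem pdx_mink8 (hA : DifferentiableAt ℝ A p) (hB : DifferentiableAt ℝ B p)
    (hC : DifferentiableAt ℝ C p) (hD : DifferentiableAt ℝ D p)
    (hA' : DifferentiableAt ℝ A' p) (hB' : DifferentiableAt ℝ B' p)
    (hC' : DifferentiableAt ℝ C' p) (hD' : DifferentiableAt ℝ D' p) :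
    pdx (fun q => -(A q * B q) + C q * D q + A' q * B' q + C' q * D' q) p
      = -(pdx A p * B p + A p * pdx B p) + (pdx C p * D p + C p * pdx D p)
        + (pdx A' p * B' p + A' p * pdx B' p) + (pdx C' p * D' p + C' p * pdx D' p) := by
  rw [pdx_add (((hA.fun_mul hB).fun_neg.fun_add (hC.fun_mul hD)).fun_add (hA'.fun_mul hB')) (hC'.fun_mul hD'),
    pdx_add ((hA.fun_mul hB).fun_neg.fun_add (hC.fun_mul hD)) (hA'.fun_mul hB'),
    pdx_add (hA.fun_mul hB).fun_neg (hC.fun_mul hD), pdx_neg,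
    pdx_mul hA hB, pdx_mul hC hD, pdx_mul hA' hB', pdx_mul hC' hD']

theorem pdy_mink8 (hA : DifferentiableAt ℝ A p) (hB : DifferentiableAt ℝ B p)
    (hC : DifferentiableAt ℝ C p) (hD : DifferentiableAt ℝ D p)
    (hA' : DifferentiableAt ℝ A' p) (hB' : DifferentiableAt ℝ B' p)
    (hC' : DifferentiableAt ℝ C' p) (hD' : DifferentiableAt ℝ D' p) :
    pdy (fun q => -(A q * B q) + C q * D q + A' q * B' q + C' q * D' q) p
      = -(pdy A p * B p + A p * pdy B p) + (pdy C p * D p + C p * pdy D p)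
        + (pdy A' p * B' p + A' p * pdy B' p) + (pdy C' p * D' p + C' p * pdy D' p) := by
  rw [pdy_add (((hA.fun_mul hB).fun_neg.fun_add (hC.fun_mul hD)).fun_add (hA'.fun_mul hB')) (hC'.fun_mul hD'),
    pdy_add ((hA.fun_mul hB).fun_neg.fun_add (hC.fun_mul hD)) (hA'.fun_mul hB'),
    pdy_add (hA.fun_mul hB).fun_neg (hC.fun_mul hD), pdy_neg,
    pdy_mul hA hB, pdy_mul hC hD, pdy_mul hA' hB', pdy_mul hC' hD']

theorem pdx_one_add (hA : DifferentiableAt ℝ A p) :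
    pdx (fun q => 1 + A q) p = pdx A p := by
  rw [pdx_add (differentiableAt_const 1) hA, pdx_const, zero_add]

theorem pdy_one_add (hA : DifferentiableAt ℝ A p) :
    pdy (fun q => 1 + A q) p = pdy A p := by
  rw [pdy_add (differentiableAt_const 1) hA, pdy_const, zero_add]

end workhorse

end Aux


open Aux

set_option maxHeartbeats 2000000

theorem stmt14 (g : ℝ × ℝ → ℝ)
    (hg : ContDiffOn ℝ (⊤ : ℕ∞) g {p : ℝ × ℝ | p.1 ^ 2 + p.2 ^ 2 < 1})
    (k a b c : ℝ)
    (hg0 : g (0, 0) = 0) (hgx : pdx g (0, 0) = 0) (hgy : pdy g (0, 0) = 0)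
    (hgxx : pdx (pdx g) (0, 0) = k + 1 / 2) (hgyy : pdy (pdy g) (0, 0) = k + 1 / 2)
    (hgxy : pdx (pdy g) (0, 0) = 0)
    (hgxxy : pdx (pdx (pdy g)) (0, 0) = 0)
    (hgxxx : pdx (pdx (pdx g)) (0, 0) = a)
    (hgxyy : pdx (pdy (pdy g)) (0, 0) = b)
    (hgyyy : pdy (pdy (pdy g)) (0, 0) = c)
    (U : Set (ℝ × ℝ)) (hU : U ∈ nhds ((0, 0) : ℝ × ℝ))
    (η : ℝ × ℝ → (Fin 4 → ℝ)) (hη : ContDiffOn ℝ 1 η U)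
    (h1 : ∀ p ∈ U, mink (η p) (xiCone p) = 1)
    (h2 : ∀ p ∈ U, mink (η p) (η p) = 0)
    (h3 : ∀ p ∈ U, mink (η p) (pdx (PhiCone g) p) = 0)
    (h4 : ∀ p ∈ U, mink (η p) (pdy (PhiCone g) p) = 0) :
    AcoefP (PhiCone g) η (0, 0) = 0 ∧
    BcoefP (PhiCone g) η (0, 0) = 0 ∧
    CcoefP (PhiCone g) η (0, 0) = 0 ∧
    pdx (AcoefP (PhiCone g) η) (0, 0) = 0 ∧
    pdy (AcoefP (PhiCone g) η) (0, 0) = b ∧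
    pdx (BcoefP (PhiCone g) η) (0, 0) = a - b ∧
    pdy (BcoefP (PhiCone g) η) (0, 0) = -c ∧
    pdx (CcoefP (PhiCone g) η) (0, 0) = 0 ∧
    pdy (CcoefP (PhiCone g) η) (0, 0) = -b := by
  classical
  have hzS : ((0, 0) : ℝ × ℝ) ∈ Scone := zero_mem_Scone
  have hgS : ∀ q ∈ Scone, ContDiffAt ℝ (⊤ : ℕ∞) g q := fun q hq =>
    hg.contDiffAt (isOpen_Scone.mem_nhds hq)
  -- smoothness chains for g
  have sgx : ∀ q ∈ Scone, ContDiffAt ℝ (⊤ : ℕ∞) (pdx g) q := fun q hq => contDiffAt_pdx (hgS q hq)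
  have sgy : ∀ q ∈ Scone, ContDiffAt ℝ (⊤ : ℕ∞) (pdy g) q := fun q hq => contDiffAt_pdy (hgS q hq)
  have sgxx : ∀ q ∈ Scone, ContDiffAt ℝ (⊤ : ℕ∞) (pdx (pdx g)) q := fun q hq => contDiffAt_pdx (sgx q hq)
  have sgxy : ∀ q ∈ Scone, ContDiffAt ℝ (⊤ : ℕ∞) (pdx (pdy g)) q := fun q hq => contDiffAt_pdx (sgy q hq)
  have sgyy : ∀ q ∈ Scone, ContDiffAt ℝ (⊤ : ℕ∞) (pdy (pdy g)) q := fun q hq => contDiffAt_pdy (sgy q hq)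
  -- differentiability at points of Scone
  have dg : ∀ q ∈ Scone, DifferentiableAt ℝ g q := fun q hq => (hgS q hq).differentiableAt (by simp)
  have dgx : ∀ q ∈ Scone, DifferentiableAt ℝ (pdx g) q := fun q hq => (sgx q hq).differentiableAt (by simp)
  have dgy : ∀ q ∈ Scone, DifferentiableAt ℝ (pdy g) q := fun q hq => (sgy q hq).differentiableAt (by simp)
  have dgxx : ∀ q ∈ Scone, DifferentiableAt ℝ (pdx (pdx g)) q := fun q hq => (sgxx q hq).differentiableAt (by simp)
  have dgxy : ∀ q ∈ Scone, DifferentiableAt ℝ (pdx (pdy g)) q := fun q hq => (sgxy q hq).differentiableAt (by simp)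
  have dgyy : ∀ q ∈ Scone, DifferentiableAt ℝ (pdy (pdy g)) q := fun q hq => (sgyy q hq).differentiableAt (by simp)
  have dP0 : ∀ q ∈ Scone, DifferentiableAt ℝ (fun r => 1 + g r) q := fun q hq => (dg q hq).const_add 1
  -- w diff
  have dwx : ∀ q ∈ Scone, DifferentiableAt ℝ (pdx wF) q := fun q hq =>
    (contDiffAt_pdx (contDiffAt_wF hq)).differentiableAt (by simp)
  have dwy : ∀ q ∈ Scone, DifferentiableAt ℝ (pdy wF) q := fun q hq =>
    (contDiffAt_pdy (contDiffAt_wF hq)).differentiableAt (by simp)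
  have dwxx : ∀ q ∈ Scone, DifferentiableAt ℝ (pdx (pdx wF)) q := fun q hq =>
    (contDiffAt_pdx (contDiffAt_pdx (contDiffAt_wF hq))).differentiableAt (by simp)
  have dwxy : ∀ q ∈ Scone, DifferentiableAt ℝ (pdx (pdy wF)) q := fun q hq =>
    (contDiffAt_pdx (contDiffAt_pdy (contDiffAt_wF hq))).differentiableAt (by simp)
  have dwyx : ∀ q ∈ Scone, DifferentiableAt ℝ (pdy (pdx wF)) q := fun q hq =>
    (contDiffAt_pdy (contDiffAt_pdx (contDiffAt_wF hq))).differentiableAt (by simp)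
  have dwyy : ∀ q ∈ Scone, DifferentiableAt ℝ (pdy (pdy wF)) q := fun q hq =>
    (contDiffAt_pdy (contDiffAt_pdy (contDiffAt_wF hq))).differentiableAt (by simp)
  -- commutation facts for g
  have hcommS : ∀ q ∈ Scone, pdx (pdy g) q = pdy (pdx g) q := fun q hq =>
    pdx_pdy_comm (hgS q hq)
  have hyxev : pdy (pdx g) =ᶠ[nhds ((0, 0) : ℝ × ℝ)] pdx (pdy g) :=
    eventuallyEq_on_open isOpen_Scone hzS fun q hq => (hcommS q hq).symm
  have hgyx0 : pdy (pdx g) (0, 0) = 0 := by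
    rw [← pdx_pdy_comm (hgS _ hzS)]; exact hgxy
  have hgyxx : pdy (pdx (pdx g)) (0, 0) = 0 := by
    rw [← pdx_pdy_comm (sgx _ hzS), pdx_congr hyxev]; exact hgxxy
  have hgyxy : pdy (pdx (pdy g)) (0, 0) = b := by
    rw [← pdx_pdy_comm (sgy _ hzS)]; exact hgxyy
  -- component function identities
  have hwEq : ∀ q : ℝ × ℝ, Real.sqrt (1 - q.1 ^ 2 - q.2 ^ 2) = wF q := by
    intro q; unfold wF; norm_num [pow_two]
  have hc0 : (fun q => PhiCone g q 0) = (fun r => 1 + g r) := by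
    funext q; show (1 + g q) * xiCone q 0 = _; simp [xiCone]
  have hc1 : (fun q => PhiCone g q 1) = (fun r => (1 + g r) * r.1) := by
    funext q; show (1 + g q) * xiCone q 1 = _; simp [xiCone]
  have hc2 : (fun q => PhiCone g q 2) = (fun r => (1 + g r) * r.2) := by
    funext q; show (1 + g q) * xiCone q 2 = _; simp [xiCone]
  have hc3 : (fun q => PhiCone g q 3) = (fun r => (1 + g r) * wF r) := by
    funext q; show (1 + g q) * xiCone q 3 = _; simp [xiCone, hwEq]
  -- level 1 derivative formulas on Scone
  have F0x : ∀ q ∈ Scone, pdx (fun r => 1 + g r) q = pdx g q := fun q hq =>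
    pdx_one_add (dg q hq)
  have F0y : ∀ q ∈ Scone, pdy (fun r => 1 + g r) q = pdy g q := fun q hq =>
    pdy_one_add (dg q hq)
  have F1x : ∀ q ∈ Scone, pdx (fun r => (1 + g r) * r.1) q = pdx g q * q.1 + (1 + g q) * 1 := by
    intro q hq
    rw [pdx_mul (dP0 q hq) differentiableAt_fst, pdx_one_add (dg q hq), pdx_fst]
  have F1y : ∀ q ∈ Scone, pdy (fun r => (1 + g r) * r.1) q = pdy g q * q.1 + (1 + g q) * 0 := by
    intro q hq
    rw [pdy_mul (dP0 q hq) differentiableAt_fst, pdy_one_add (dg q hq), pdy_fst]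
  have F2x : ∀ q ∈ Scone, pdx (fun r => (1 + g r) * r.2) q = pdx g q * q.2 + (1 + g q) * 0 := by
    intro q hq
    rw [pdx_mul (dP0 q hq) differentiableAt_snd, pdx_one_add (dg q hq), pdx_snd]
  have F2y : ∀ q ∈ Scone, pdy (fun r => (1 + g r) * r.2) q = pdy g q * q.2 + (1 + g q) * 1 := by
    intro q hq
    rw [pdy_mul (dP0 q hq) differentiableAt_snd, pdy_one_add (dg q hq), pdy_snd]
  have F3x : ∀ q ∈ Scone, pdx (fun r => (1 + g r) * wF r) q
      = pdx g q * wF q + (1 + g q) * pdx wF q := by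
    intro q hq
    rw [pdx_mul (dP0 q hq) (dW hq), pdx_one_add (dg q hq)]
  have F3y : ∀ q ∈ Scone, pdy (fun r => (1 + g r) * wF r) q
      = pdy g q * wF q + (1 + g q) * pdy wF q := by
    intro q hq
    rw [pdy_mul (dP0 q hq) (dW hq), pdy_one_add (dg q hq)]
  -- eventual equalities for level 1
  have evF0x : ∀ q ∈ Scone, pdx (fun r => 1 + g r) =ᶠ[nhds q] pdx g := fun q hq =>
    eventuallyEq_on_open isOpen_Scone hq F0x
  have evF0y : ∀ q ∈ Scone, pdy (fun r => 1 + g r) =ᶠ[nhds q] pdy g := fun q hq =>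
    eventuallyEq_on_open isOpen_Scone hq F0y
  have evF1x : ∀ q ∈ Scone, pdx (fun r => (1 + g r) * r.1)
      =ᶠ[nhds q] (fun r => pdx g r * r.1 + (1 + g r) * 1) := fun q hq =>
    eventuallyEq_on_open isOpen_Scone hq F1x
  have evF1y : ∀ q ∈ Scone, pdy (fun r => (1 + g r) * r.1)
      =ᶠ[nhds q] (fun r => pdy g r * r.1 + (1 + g r) * 0) := fun q hq =>
    eventuallyEq_on_open isOpen_Scone hq F1y
  have evF2x : ∀ q ∈ Scone, pdx (fun r => (1 + g r) * r.2)
      =ᶠ[nhds q] (fun r => pdx g r * r.2 + (1 + g r) * 0) := fun q hq =>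
    eventuallyEq_on_open isOpen_Scone hq F2x
  have evF2y : ∀ q ∈ Scone, pdy (fun r => (1 + g r) * r.2)
      =ᶠ[nhds q] (fun r => pdy g r * r.2 + (1 + g r) * 1) := fun q hq =>
    eventuallyEq_on_open isOpen_Scone hq F2y
  have evF3x : ∀ q ∈ Scone, pdx (fun r => (1 + g r) * wF r)
      =ᶠ[nhds q] (fun r => pdx g r * wF r + (1 + g r) * pdx wF r) := fun q hq =>
    eventuallyEq_on_open isOpen_Scone hq F3x
  have evF3y : ∀ q ∈ Scone, pdy (fun r => (1 + g r) * wF r)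
      =ᶠ[nhds q] (fun r => pdy g r * wF r + (1 + g r) * pdy wF r) := fun q hq =>
    eventuallyEq_on_open isOpen_Scone hq F3y
  -- level 1 values at the origin
  have V0x : pdx (fun r => 1 + g r) (0, 0) = 0 := by rw [F0x _ hzS, hgx]
  have V0y : pdy (fun r => 1 + g r) (0, 0) = 0 := by rw [F0y _ hzS, hgy]
  have V1x : pdx (fun r => (1 + g r) * r.1) (0, 0) = 1 := by
    rw [F1x _ hzS, hgx, hg0]; norm_num
  have V1y : pdy (fun r => (1 + g r) * r.1) (0, 0) = 0 := by
    rw [F1y _ hzS, hgy]; norm_num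
  have V2x : pdx (fun r => (1 + g r) * r.2) (0, 0) = 0 := by
    rw [F2x _ hzS, hgx]; norm_num
  have V2y : pdy (fun r => (1 + g r) * r.2) (0, 0) = 1 := by
    rw [F2y _ hzS, hgy, hg0]; norm_num
  have V3x : pdx (fun r => (1 + g r) * wF r) (0, 0) = 0 := by
    rw [F3x _ hzS, hgx, pdx_wF_zero]; norm_num
  have V3y : pdy (fun r => (1 + g r) * wF r) (0, 0) = 0 := by
    rw [F3y _ hzS, hgy, pdy_wF_zero]; norm_num
  -- level 2 values at the origin
  have V0xx : pdx (pdx (fun r => 1 + g r)) (0, 0) = k + 1 / 2 := by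
    rw [pdx_congr (evF0x _ hzS)]; exact hgxx
  have V0xy : pdx (pdy (fun r => 1 + g r)) (0, 0) = 0 := by
    rw [pdx_congr (evF0y _ hzS)]; exact hgxy
  have V0yx : pdy (pdx (fun r => 1 + g r)) (0, 0) = 0 := by
    rw [pdy_congr (evF0x _ hzS)]; exact hgyx0
  have V0yy : pdy (pdy (fun r => 1 + g r)) (0, 0) = k + 1 / 2 := by
    rw [pdy_congr (evF0y _ hzS)]; exact hgyy
  have V1xx : pdx (pdx (fun r => (1 + g r) * r.1)) (0, 0) = 0 := by
    rw [pdx_congr (evF1x _ hzS),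
      pdx_mul2_add (dgx _ hzS) differentiableAt_fst (dP0 _ hzS) (differentiableAt_const 1)]
    simp only [hgxx, hgx, pdx_fst, pdx_const, V0x]
    norm_num
  have V1xy : pdx (pdy (fun r => (1 + g r) * r.1)) (0, 0) = 0 := by
    rw [pdx_congr (evF1y _ hzS),
      pdx_mul2_add (dgy _ hzS) differentiableAt_fst (dP0 _ hzS) (differentiableAt_const 0)]
    simp only [hgxy, hgy, pdx_fst, pdx_const, V0x]
    norm_num
  have V1yx : pdy (pdx (fun r => (1 + g r) * r.1)) (0, 0) = 0 := by
    rw [pdy_congr (evF1x _ hzS),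
      pdy_mul2_add (dgx _ hzS) differentiableAt_fst (dP0 _ hzS) (differentiableAt_const 1)]
    simp only [hgyx0, hgx, pdy_fst, pdy_const, V0y]
    norm_num
  have V1yy : pdy (pdy (fun r => (1 + g r) * r.1)) (0, 0) = 0 := by
    rw [pdy_congr (evF1y _ hzS),
      pdy_mul2_add (dgy _ hzS) differentiableAt_fst (dP0 _ hzS) (differentiableAt_const 0)]
    simp only [hgyy, hgy, pdy_fst, pdy_const, V0y]
    norm_num
  have V2xx : pdx (pdx (fun r => (1 + g r) * r.2)) (0, 0) = 0 := by
    rw [pdx_congr (evF2x _ hzS),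
      pdx_mul2_add (dgx _ hzS) differentiableAt_snd (dP0 _ hzS) (differentiableAt_const 0)]
    simp only [hgxx, hgx, pdx_snd, pdx_const, V0x]
    norm_num
  have V2xy : pdx (pdy (fun r => (1 + g r) * r.2)) (0, 0) = 0 := by
    rw [pdx_congr (evF2y _ hzS),
      pdx_mul2_add (dgy _ hzS) differentiableAt_snd (dP0 _ hzS) (differentiableAt_const 1)]
    simp only [hgxy, hgy, pdx_snd, pdx_const, V0x]
    norm_num
  have V2yx : pdy (pdx (fun r => (1 + g r) * r.2)) (0, 0) = 0 := by
    rw [pdy_congr (evF2x _ hzS),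
      pdy_mul2_add (dgx _ hzS) differentiableAt_snd (dP0 _ hzS) (differentiableAt_const 0)]
    simp only [hgyx0, hgx, pdy_snd, pdy_const, V0y]
    norm_num
  have V2yy : pdy (pdy (fun r => (1 + g r) * r.2)) (0, 0) = 0 := by
    rw [pdy_congr (evF2y _ hzS),
      pdy_mul2_add (dgy _ hzS) differentiableAt_snd (dP0 _ hzS) (differentiableAt_const 1)]
    simp only [hgyy, hgy, pdy_snd, pdy_const, V0y]
    norm_num
  have V3xx : pdx (pdx (fun r => (1 + g r) * wF r)) (0, 0) = k - 1 / 2 := by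
    rw [pdx_congr (evF3x _ hzS),
      pdx_mul2_add (dgx _ hzS) (dW hzS) (dP0 _ hzS) (dwx _ hzS)]
    simp only [hgxx, hgx, hg0, wF_zero, pdx_wF_zero, wxx0, V0x]
    norm_num
    try ring
  have V3xy : pdx (pdy (fun r => (1 + g r) * wF r)) (0, 0) = 0 := by
    rw [pdx_congr (evF3y _ hzS),
      pdx_mul2_add (dgy _ hzS) (dW hzS) (dP0 _ hzS) (dwy _ hzS)]
    simp only [hgxy, hgy, wF_zero, pdx_wF_zero, pdy_wF_zero, wxy0, V0x]
    norm_num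
  have V3yx : pdy (pdx (fun r => (1 + g r) * wF r)) (0, 0) = 0 := by
    rw [pdy_congr (evF3x _ hzS),
      pdy_mul2_add (dgx _ hzS) (dW hzS) (dP0 _ hzS) (dwx _ hzS)]
    simp only [hgyx0, hgx, wF_zero, pdx_wF_zero, pdy_wF_zero, wyx0, V0y]
    norm_num
  have V3yy : pdy (pdy (fun r => (1 + g r) * wF r)) (0, 0) = k - 1 / 2 := by
    rw [pdy_congr (evF3y _ hzS),
      pdy_mul2_add (dgy _ hzS) (dW hzS) (dP0 _ hzS) (dwy _ hzS)]
    simp only [hgyy, hgy, hg0, wF_zero, pdy_wF_zero, wyy0, V0y]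
    norm_num
    try ring
  -- level 2 formulas on Scone for components 0 and 3
  have G0xx : ∀ q ∈ Scone, pdx (pdx (fun r => 1 + g r)) q = pdx (pdx g) q := fun q hq =>
    pdx_congr (evF0x q hq)
  have G0xy : ∀ q ∈ Scone, pdx (pdy (fun r => 1 + g r)) q = pdx (pdy g) q := fun q hq =>
    pdx_congr (evF0y q hq)
  have G0yy : ∀ q ∈ Scone, pdy (pdy (fun r => 1 + g r)) q = pdy (pdy g) q := fun q hq =>
    pdy_congr (evF0y q hq)
  have G3xx : ∀ q ∈ Scone, pdx (pdx (fun r => (1 + g r) * wF r)) q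
      = pdx (pdx g) q * wF q + pdx g q * pdx wF q + pdx g q * pdx wF q
        + (1 + g q) * pdx (pdx wF) q := by
    intro q hq
    rw [pdx_congr (evF3x q hq), pdx_mul2_add (dgx q hq) (dW hq) (dP0 q hq) (dwx q hq),
      F0x q hq]
    ring
  have G3xy : ∀ q ∈ Scone, pdx (pdy (fun r => (1 + g r) * wF r)) q
      = pdx (pdy g) q * wF q + pdy g q * pdx wF q + pdx g q * pdy wF q
        + (1 + g q) * pdx (pdy wF) q := by
    intro q hq
    rw [pdx_congr (evF3y q hq), pdx_mul2_add (dgy q hq) (dW hq) (dP0 q hq) (dwy q hq),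
      F0x q hq]
    ring
  have G3yy : ∀ q ∈ Scone, pdy (pdy (fun r => (1 + g r) * wF r)) q
      = pdy (pdy g) q * wF q + pdy g q * pdy wF q + pdy g q * pdy wF q
        + (1 + g q) * pdy (pdy wF) q := by
    intro q hq
    rw [pdy_congr (evF3y q hq), pdy_mul2_add (dgy q hq) (dW hq) (dP0 q hq) (dwy q hq),
      F0y q hq]
    ring
  have evG0xx : pdx (pdx (fun r => 1 + g r)) =ᶠ[nhds ((0, 0) : ℝ × ℝ)] pdx (pdx g) :=
    eventuallyEq_on_open isOpen_Scone hzS G0xx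
  have evG0xy : pdx (pdy (fun r => 1 + g r)) =ᶠ[nhds ((0, 0) : ℝ × ℝ)] pdx (pdy g) :=
    eventuallyEq_on_open isOpen_Scone hzS G0xy
  have evG0yy : pdy (pdy (fun r => 1 + g r)) =ᶠ[nhds ((0, 0) : ℝ × ℝ)] pdy (pdy g) :=
    eventuallyEq_on_open isOpen_Scone hzS G0yy
  have evG3xx : pdx (pdx (fun r => (1 + g r) * wF r)) =ᶠ[nhds ((0, 0) : ℝ × ℝ)]
      (fun q => pdx (pdx g) q * wF q + pdx g q * pdx wF q + pdx g q * pdx wF q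
        + (1 + g q) * pdx (pdx wF) q) :=
    eventuallyEq_on_open isOpen_Scone hzS G3xx
  have evG3xy : pdx (pdy (fun r => (1 + g r) * wF r)) =ᶠ[nhds ((0, 0) : ℝ × ℝ)]
      (fun q => pdx (pdy g) q * wF q + pdy g q * pdx wF q + pdx g q * pdy wF q
        + (1 + g q) * pdx (pdy wF) q) :=
    eventuallyEq_on_open isOpen_Scone hzS G3xy
  have evG3yy : pdy (pdy (fun r => (1 + g r) * wF r)) =ᶠ[nhds ((0, 0) : ℝ × ℝ)]
      (fun q => pdy (pdy g) q * wF q + pdy g q * pdy wF q + pdy g q * pdy wF q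
        + (1 + g q) * pdy (pdy wF) q) :=
    eventuallyEq_on_open isOpen_Scone hzS G3yy
  -- third derivatives at the origin, component 0
  have T0xxx : pdx (pdx (pdx (fun r => 1 + g r))) (0, 0) = a := by
    rw [pdx_congr evG0xx]; exact hgxxx
  have T0yxx : pdy (pdx (pdx (fun r => 1 + g r))) (0, 0) = 0 := by
    rw [pdy_congr evG0xx]; exact hgyxx
  have T0xxy : pdx (pdx (pdy (fun r => 1 + g r))) (0, 0) = 0 := by
    rw [pdx_congr evG0xy]; exact hgxxy
  have T0yxy : pdy (pdx (pdy (fun r => 1 + g r))) (0, 0) = b := by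
    rw [pdy_congr evG0xy]; exact hgyxy
  have T0xyy : pdx (pdy (pdy (fun r => 1 + g r))) (0, 0) = b := by
    rw [pdx_congr evG0yy]; exact hgxyy
  have T0yyy : pdy (pdy (pdy (fun r => 1 + g r))) (0, 0) = c := by
    rw [pdy_congr evG0yy]; exact hgyyy
  -- third derivatives at the origin, component 3
  have T3xxx : pdx (pdx (pdx (fun r => (1 + g r) * wF r))) (0, 0) = a := by
    rw [pdx_congr evG3xx, pdx_mul4_add (dgxx _ hzS) (dW hzS) (dgx _ hzS) (dwx _ hzS)
      (dgx _ hzS) (dwx _ hzS) (dP0 _ hzS) (dwxx _ hzS)]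
    simp only [hgxxx, hgxx, hgx, hg0, wF_zero, pdx_wF_zero, wxx0, wxxx0, V0x]
    norm_num
  have T3yxx : pdy (pdx (pdx (fun r => (1 + g r) * wF r))) (0, 0) = 0 := by
    rw [pdy_congr evG3xx, pdy_mul4_add (dgxx _ hzS) (dW hzS) (dgx _ hzS) (dwx _ hzS)
      (dgx _ hzS) (dwx _ hzS) (dP0 _ hzS) (dwxx _ hzS)]
    simp only [hgyxx, hgxx, hgyx0, hgx, hg0, wF_zero, pdx_wF_zero, pdy_wF_zero,
      wxx0, wyx0, wyxx0, V0y]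
    norm_num
  have T3xxy : pdx (pdx (pdy (fun r => (1 + g r) * wF r))) (0, 0) = 0 := by
    rw [pdx_congr evG3xy, pdx_mul4_add (dgxy _ hzS) (dW hzS) (dgy _ hzS) (dwx _ hzS)
      (dgx _ hzS) (dwy _ hzS) (dP0 _ hzS) (dwxy _ hzS)]
    simp only [hgxxy, hgxy, hgxx, hgx, hgy, hg0, wF_zero, pdx_wF_zero, pdy_wF_zero,
      wxx0, wxy0, wxxy0, V0x]
    norm_num
  have T3yxy : pdy (pdx (pdy (fun r => (1 + g r) * wF r))) (0, 0) = b := by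
    rw [pdy_congr evG3xy, pdy_mul4_add (dgxy _ hzS) (dW hzS) (dgy _ hzS) (dwx _ hzS)
      (dgx _ hzS) (dwy _ hzS) (dP0 _ hzS) (dwxy _ hzS)]
    simp only [hgyxy, hgxy, hgyy, hgyx0, hgx, hgy, hg0, wF_zero, pdx_wF_zero, pdy_wF_zero,
      wyx0, wyy0, wxy0, wyxy0, V0y]
    norm_num
  have T3xyy : pdx (pdy (pdy (fun r => (1 + g r) * wF r))) (0, 0) = b := by
    rw [pdx_congr evG3yy, pdx_mul4_add (dgyy _ hzS) (dW hzS) (dgy _ hzS) (dwy _ hzS)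
      (dgy _ hzS) (dwy _ hzS) (dP0 _ hzS) (dwyy _ hzS)]
    simp only [hgxyy, hgyy, hgxy, hgy, hg0, wF_zero, pdx_wF_zero, pdy_wF_zero,
      wxy0, wyy0, wxyy0, V0x]
    norm_num
  have T3yyy : pdy (pdy (pdy (fun r => (1 + g r) * wF r))) (0, 0) = c := by
    rw [pdy_congr evG3yy, pdy_mul4_add (dgyy _ hzS) (dW hzS) (dgy _ hzS) (dwy _ hzS)
      (dgy _ hzS) (dwy _ hzS) (dP0 _ hzS) (dwyy _ hzS)]
    simp only [hgyyy, hgyy, hgy, hg0, wF_zero, pdy_wF_zero, wyy0, wyyy0, V0y]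
    norm_num
  -- η component differentiability and values
  have hzU : ((0, 0) : ℝ × ℝ) ∈ U := mem_of_mem_nhds hU
  have dη : DifferentiableAt ℝ η (0, 0) := (hη.contDiffAt hU).differentiableAt one_ne_zero
  have hN : ∀ i : Fin 4, DifferentiableAt ℝ (fun q => η q i) (0, 0) := fun i =>
    differentiableAt_pi.mp dη i
  have hdComp : ∀ q ∈ Scone, ∀ i : Fin 4, DifferentiableAt ℝ (fun s => PhiCone g s i) q := by
    intro q hq i
    fin_cases i
    · show DifferentiableAt ℝ (fun s => PhiCone g s 0) q
      rw [hc0]; exact dP0 q hq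
    · show DifferentiableAt ℝ (fun s => PhiCone g s 1) q
      rw [hc1]; exact (dP0 q hq).mul differentiableAt_fst
    · show DifferentiableAt ℝ (fun s => PhiCone g s 2) q
      rw [hc2]; exact (dP0 q hq).mul differentiableAt_snd
    · show DifferentiableAt ℝ (fun s => PhiCone g s 3) q
      rw [hc3]; exact (dP0 q hq).mul (dW hq)
  have hvx0 : pdx (PhiCone g) (0, 0) 0 = 0 := by
    rw [pdx_pi (hdComp _ hzS) 0, hc0]; exact V0x
  have hvx1 : pdx (PhiCone g) (0, 0) 1 = 1 := by
    rw [pdx_pi (hdComp _ hzS) 1, hc1]; exact V1x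
  have hvx2 : pdx (PhiCone g) (0, 0) 2 = 0 := by
    rw [pdx_pi (hdComp _ hzS) 2, hc2]; exact V2x
  have hvx3 : pdx (PhiCone g) (0, 0) 3 = 0 := by
    rw [pdx_pi (hdComp _ hzS) 3, hc3]; exact V3x
  have hvy0 : pdy (PhiCone g) (0, 0) 0 = 0 := by
    rw [pdy_pi (hdComp _ hzS) 0, hc0]; exact V0y
  have hvy1 : pdy (PhiCone g) (0, 0) 1 = 0 := by
    rw [pdy_pi (hdComp _ hzS) 1, hc1]; exact V1y
  have hvy2 : pdy (PhiCone g) (0, 0) 2 = 1 := by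
    rw [pdy_pi (hdComp _ hzS) 2, hc2]; exact V2y
  have hvy3 : pdy (PhiCone g) (0, 0) 3 = 0 := by
    rw [pdy_pi (hdComp _ hzS) 3, hc3]; exact V3y
  have h3z := h3 _ hzU
  have h4z := h4 _ hzU
  have h1z := h1 _ hzU
  have h2z := h2 _ hzU
  unfold mink at h3z h4z h1z h2z
  rw [hvx0, hvx1, hvx2, hvx3] at h3z
  rw [hvy0, hvy1, hvy2, hvy3] at h4z
  have hxi0 : xiCone (0, 0) 0 = 1 := by simp [xiCone]
  have hxi1 : xiCone (0, 0) 1 = 0 := by simp [xiCone]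
  have hxi2 : xiCone (0, 0) 2 = 0 := by simp [xiCone]
  have hxi3 : xiCone (0, 0) 3 = 1 := by simp [xiCone]
  rw [hxi0, hxi1, hxi2, hxi3] at h1z
  have hN1z : η (0, 0) 1 = 0 := by linear_combination h3z
  have hN2z : η (0, 0) 2 = 0 := by linear_combination h4z
  have hsum : η (0, 0) 3 = 1 + η (0, 0) 0 := by linear_combination h1z
  have hN0z : η (0, 0) 0 = -(1 / 2) := by
    rw [hN1z, hN2z, hsum] at h2z
    ring_nf at h2z
    linarith
  have hN3z : η (0, 0) 3 = 1 / 2 := by rw [hsum, hN0z]; norm_num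
  -- first derivatives of η components 0 and 3 vanish at the origin
  have hm1 : (fun q => mink (η q) (xiCone q))
      = (fun q => -(η q 0 * 1) + η q 1 * q.1 + η q 2 * q.2 + η q 3 * wF q) := by
    funext q
    unfold mink
    simp [xiCone, hwEq]
  have evm1 : (fun q => -(η q 0 * 1) + η q 1 * q.1 + η q 2 * q.2 + η q 3 * wF q)
      =ᶠ[nhds ((0, 0) : ℝ × ℝ)] (fun _ => (1 : ℝ)) := by
    rw [← hm1]
    exact Filter.eventually_of_mem hU h1
  have hm2 : (fun q => mink (η q) (η q))
      = (fun q => -(η q 0 * η q 0) + η q 1 * η q 1 + η q 2 * η q 2 + η q 3 * η q 3) := rfl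
  have evm2 : (fun q => -(η q 0 * η q 0) + η q 1 * η q 1 + η q 2 * η q 2 + η q 3 * η q 3)
      =ᶠ[nhds ((0, 0) : ℝ × ℝ)] (fun _ => (0 : ℝ)) := by
    rw [← hm2]
    exact Filter.eventually_of_mem hU h2
  have e1x : pdx (fun q => -(η q 0 * 1) + η q 1 * q.1 + η q 2 * q.2 + η q 3 * wF q) (0, 0)
      = 0 := by rw [pdx_congr evm1, pdx_const]
  have e1y : pdy (fun q => -(η q 0 * 1) + η q 1 * q.1 + η q 2 * q.2 + η q 3 * wF q) (0, 0)
      = 0 := by rw [pdy_congr evm1, pdy_const]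
  have e2x : pdx (fun q => -(η q 0 * η q 0) + η q 1 * η q 1 + η q 2 * η q 2 + η q 3 * η q 3)
      (0, 0) = 0 := by rw [pdx_congr evm2, pdx_const]
  have e2y : pdy (fun q => -(η q 0 * η q 0) + η q 1 * η q 1 + η q 2 * η q 2 + η q 3 * η q 3)
      (0, 0) = 0 := by rw [pdy_congr evm2, pdy_const]
  rw [pdx_mink8 (hN 0) (differentiableAt_const 1) (hN 1) differentiableAt_fst
      (hN 2) differentiableAt_snd (hN 3) (dW hzS), pdx_const, pdx_fst, pdx_snd,
      pdx_wF_zero, hN1z, hN2z] at e1x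
  have hzfst : ((0, 0) : ℝ × ℝ).1 = 0 := rfl
  have hzsnd : ((0, 0) : ℝ × ℝ).2 = 0 := rfl
  rw [hzfst, hzsnd, wF_zero] at e1x
  rw [pdy_mink8 (hN 0) (differentiableAt_const 1) (hN 1) differentiableAt_fst
      (hN 2) differentiableAt_snd (hN 3) (dW hzS), pdy_const, pdy_fst, pdy_snd,
      pdy_wF_zero, hN1z, hN2z, hzfst, hzsnd, wF_zero] at e1y
  rw [pdx_mink8 (hN 0) (hN 0) (hN 1) (hN 1) (hN 2) (hN 2) (hN 3) (hN 3),
      hN1z, hN2z, hN0z, hN3z] at e2x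
  rw [pdy_mink8 (hN 0) (hN 0) (hN 1) (hN 1) (hN 2) (hN 2) (hN 3) (hN 3),
      hN1z, hN2z, hN0z, hN3z] at e2y
  have ha0 : pdx (fun q => η q 0) (0, 0) = 0 := by linarith [e1x, e2x]
  have ha3 : pdx (fun q => η q 3) (0, 0) = 0 := by linarith [e1x, e2x]
  have hb0 : pdy (fun q => η q 0) (0, 0) = 0 := by linarith [e1y, e2y]
  have hb3 : pdy (fun q => η q 3) (0, 0) = 0 := by linarith [e1y, e2y]
  -- smoothness of components
  have sP0 : ∀ q ∈ Scone, ContDiffAt ℝ (⊤ : ℕ∞) (fun r => 1 + g r) q := fun q hq =>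
    contDiffAt_const.add (hgS q hq)
  have sP1 : ∀ q ∈ Scone, ContDiffAt ℝ (⊤ : ℕ∞) (fun r => (1 + g r) * r.1) q := fun q hq =>
    (sP0 q hq).mul contDiff_fst.contDiffAt
  have sP2 : ∀ q ∈ Scone, ContDiffAt ℝ (⊤ : ℕ∞) (fun r => (1 + g r) * r.2) q := fun q hq =>
    (sP0 q hq).mul contDiff_snd.contDiffAt
  have sP3 : ∀ q ∈ Scone, ContDiffAt ℝ (⊤ : ℕ∞) (fun r => (1 + g r) * wF r) q := fun q hq =>
    (sP0 q hq).mul (contDiffAt_wF hq)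
  have dP0x : ∀ q ∈ Scone, DifferentiableAt ℝ (pdx (fun r => 1 + g r)) q := fun q hq =>
    (contDiffAt_pdx (sP0 q hq)).differentiableAt (by simp)
  have dP0y : ∀ q ∈ Scone, DifferentiableAt ℝ (pdy (fun r => 1 + g r)) q := fun q hq =>
    (contDiffAt_pdy (sP0 q hq)).differentiableAt (by simp)
  have dP1x : ∀ q ∈ Scone, DifferentiableAt ℝ (pdx (fun r => (1 + g r) * r.1)) q := fun q hq =>
    (contDiffAt_pdx (sP1 q hq)).differentiableAt (by simp)
  have dP1y : ∀ q ∈ Scone, DifferentiableAt ℝ (pdy (fun r => (1 + g r) * r.1)) q := fun q hq =>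
    (contDiffAt_pdy (sP1 q hq)).differentiableAt (by simp)
  have dP2x : ∀ q ∈ Scone, DifferentiableAt ℝ (pdx (fun r => (1 + g r) * r.2)) q := fun q hq =>
    (contDiffAt_pdx (sP2 q hq)).differentiableAt (by simp)
  have dP2y : ∀ q ∈ Scone, DifferentiableAt ℝ (pdy (fun r => (1 + g r) * r.2)) q := fun q hq =>
    (contDiffAt_pdy (sP2 q hq)).differentiableAt (by simp)
  have dP3x : ∀ q ∈ Scone, DifferentiableAt ℝ (pdx (fun r => (1 + g r) * wF r)) q := fun q hq =>
    (contDiffAt_pdx (sP3 q hq)).differentiableAt (by simp)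
  have dP3y : ∀ q ∈ Scone, DifferentiableAt ℝ (pdy (fun r => (1 + g r) * wF r)) q := fun q hq =>
    (contDiffAt_pdy (sP3 q hq)).differentiableAt (by simp)
  have dP0xx : ∀ q ∈ Scone, DifferentiableAt ℝ (pdx (pdx (fun r => 1 + g r))) q := fun q hq =>
    (contDiffAt_pdx (contDiffAt_pdx (sP0 q hq))).differentiableAt (by simp)
  have dP0xy : ∀ q ∈ Scone, DifferentiableAt ℝ (pdx (pdy (fun r => 1 + g r))) q := fun q hq =>
    (contDiffAt_pdx (contDiffAt_pdy (sP0 q hq))).differentiableAt (by simp)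
  have dP0yy : ∀ q ∈ Scone, DifferentiableAt ℝ (pdy (pdy (fun r => 1 + g r))) q := fun q hq =>
    (contDiffAt_pdy (contDiffAt_pdy (sP0 q hq))).differentiableAt (by simp)
  have dP1xx : ∀ q ∈ Scone, DifferentiableAt ℝ (pdx (pdx (fun r => (1 + g r) * r.1))) q := fun q hq =>
    (contDiffAt_pdx (contDiffAt_pdx (sP1 q hq))).differentiableAt (by simp)
  have dP1xy : ∀ q ∈ Scone, DifferentiableAt ℝ (pdx (pdy (fun r => (1 + g r) * r.1))) q := fun q hq =>
    (contDiffAt_pdx (contDiffAt_pdy (sP1 q hq))).differentiableAt (by simp)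
  have dP1yy : ∀ q ∈ Scone, DifferentiableAt ℝ (pdy (pdy (fun r => (1 + g r) * r.1))) q := fun q hq =>
    (contDiffAt_pdy (contDiffAt_pdy (sP1 q hq))).differentiableAt (by simp)
  have dP2xx : ∀ q ∈ Scone, DifferentiableAt ℝ (pdx (pdx (fun r => (1 + g r) * r.2))) q := fun q hq =>
    (contDiffAt_pdx (contDiffAt_pdx (sP2 q hq))).differentiableAt (by simp)
  have dP2xy : ∀ q ∈ Scone, DifferentiableAt ℝ (pdx (pdy (fun r => (1 + g r) * r.2))) q := fun q hq =>
    (contDiffAt_pdx (contDiffAt_pdy (sP2 q hq))).differentiableAt (by simp)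
  have dP2yy : ∀ q ∈ Scone, DifferentiableAt ℝ (pdy (pdy (fun r => (1 + g r) * r.2))) q := fun q hq =>
    (contDiffAt_pdy (contDiffAt_pdy (sP2 q hq))).differentiableAt (by simp)
  have dP3xx : ∀ q ∈ Scone, DifferentiableAt ℝ (pdx (pdx (fun r => (1 + g r) * wF r))) q := fun q hq =>
    (contDiffAt_pdx (contDiffAt_pdx (sP3 q hq))).differentiableAt (by simp)
  have dP3xy : ∀ q ∈ Scone, DifferentiableAt ℝ (pdx (pdy (fun r => (1 + g r) * wF r))) q := fun q hq =>
    (contDiffAt_pdx (contDiffAt_pdy (sP3 q hq))).differentiableAt (by simp)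
  have dP3yy : ∀ q ∈ Scone, DifferentiableAt ℝ (pdy (pdy (fun r => (1 + g r) * wF r))) q := fun q hq =>
    (contDiffAt_pdy (contDiffAt_pdy (sP3 q hq))).differentiableAt (by simp)
  have hloc : ∀ q ∈ Scone, ∀ᶠ r in nhds q, ∀ i : Fin 4,
      DifferentiableAt ℝ (fun s => PhiCone g s i) r := fun q hq =>
    Filter.eventually_of_mem (isOpen_Scone.mem_nhds hq) fun r hr => hdComp r hr
  have hd2x : ∀ q ∈ Scone, ∀ i : Fin 4,
      DifferentiableAt ℝ (fun r => pdx (fun s => PhiCone g s i) r) q := by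
    intro q hq i
    fin_cases i
    · show DifferentiableAt ℝ (fun r => pdx (fun s => PhiCone g s 0) r) q
      rw [hc0]; exact dP0x q hq
    · show DifferentiableAt ℝ (fun r => pdx (fun s => PhiCone g s 1) r) q
      rw [hc1]; exact dP1x q hq
    · show DifferentiableAt ℝ (fun r => pdx (fun s => PhiCone g s 2) r) q
      rw [hc2]; exact dP2x q hq
    · show DifferentiableAt ℝ (fun r => pdx (fun s => PhiCone g s 3) r) q
      rw [hc3]; exact dP3x q hq
  have hd2y : ∀ q ∈ Scone, ∀ i : Fin 4,
      DifferentiableAt ℝ (fun r => pdy (fun s => PhiCone g s i) r) q := by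
    intro q hq i
    fin_cases i
    · show DifferentiableAt ℝ (fun r => pdy (fun s => PhiCone g s 0) r) q
      rw [hc0]; exact dP0y q hq
    · show DifferentiableAt ℝ (fun r => pdy (fun s => PhiCone g s 1) r) q
      rw [hc1]; exact dP1y q hq
    · show DifferentiableAt ℝ (fun r => pdy (fun s => PhiCone g s 2) r) q
      rw [hc2]; exact dP2y q hq
    · show DifferentiableAt ℝ (fun r => pdy (fun s => PhiCone g s 3) r) q
      rw [hc3]; exact dP3y q hq
  have heeE : ∀ q ∈ Scone, eEtaP (PhiCone g) η q
      = -(pdx (pdx (fun r => 1 + g r)) q * η q 0) + pdx (pdx (fun r => (1 + g r) * r.1)) q * η q 1 + pdx (pdx (fun r => (1 + g r) * r.2)) q * η q 2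
        + pdx (pdx (fun r => (1 + g r) * wF r)) q * η q 3 := by
    intro q hq
    unfold eEtaP mink
    rw [pdx_pdx_pi (hloc q hq) (hd2x q hq) 0, pdx_pdx_pi (hloc q hq) (hd2x q hq) 1,
      pdx_pdx_pi (hloc q hq) (hd2x q hq) 2, pdx_pdx_pi (hloc q hq) (hd2x q hq) 3,
      hc0, hc1, hc2, hc3]
  have eveE : eEtaP (PhiCone g) η =ᶠ[nhds ((0, 0) : ℝ × ℝ)]
      (fun q => -(pdx (pdx (fun r => 1 + g r)) q * η q 0) + pdx (pdx (fun r => (1 + g r) * r.1)) q * η q 1 + pdx (pdx (fun r => (1 + g r) * r.2)) q * η q 2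
        + pdx (pdx (fun r => (1 + g r) * wF r)) q * η q 3) :=
    eventuallyEq_on_open isOpen_Scone hzS heeE
  have hefE : ∀ q ∈ Scone, fEtaP (PhiCone g) η q
      = -(pdx (pdy (fun r => 1 + g r)) q * η q 0) + pdx (pdy (fun r => (1 + g r) * r.1)) q * η q 1 + pdx (pdy (fun r => (1 + g r) * r.2)) q * η q 2
        + pdx (pdy (fun r => (1 + g r) * wF r)) q * η q 3 := by
    intro q hq
    unfold fEtaP mink
    rw [pdx_pdy_pi (hloc q hq) (hd2y q hq) 0, pdx_pdy_pi (hloc q hq) (hd2y q hq) 1,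
      pdx_pdy_pi (hloc q hq) (hd2y q hq) 2, pdx_pdy_pi (hloc q hq) (hd2y q hq) 3,
      hc0, hc1, hc2, hc3]
  have evfE : fEtaP (PhiCone g) η =ᶠ[nhds ((0, 0) : ℝ × ℝ)]
      (fun q => -(pdx (pdy (fun r => 1 + g r)) q * η q 0) + pdx (pdy (fun r => (1 + g r) * r.1)) q * η q 1 + pdx (pdy (fun r => (1 + g r) * r.2)) q * η q 2
        + pdx (pdy (fun r => (1 + g r) * wF r)) q * η q 3) :=
    eventuallyEq_on_open isOpen_Scone hzS hefE
  have hegE : ∀ q ∈ Scone, gEtaP (PhiCone g) η q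
      = -(pdy (pdy (fun r => 1 + g r)) q * η q 0) + pdy (pdy (fun r => (1 + g r) * r.1)) q * η q 1 + pdy (pdy (fun r => (1 + g r) * r.2)) q * η q 2
        + pdy (pdy (fun r => (1 + g r) * wF r)) q * η q 3 := by
    intro q hq
    unfold gEtaP mink
    rw [pdy_pdy_pi (hloc q hq) (hd2y q hq) 0, pdy_pdy_pi (hloc q hq) (hd2y q hq) 1,
      pdy_pdy_pi (hloc q hq) (hd2y q hq) 2, pdy_pdy_pi (hloc q hq) (hd2y q hq) 3,
      hc0, hc1, hc2, hc3]
  have evgE : gEtaP (PhiCone g) η =ᶠ[nhds ((0, 0) : ℝ × ℝ)]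
      (fun q => -(pdy (pdy (fun r => 1 + g r)) q * η q 0) + pdy (pdy (fun r => (1 + g r) * r.1)) q * η q 1 + pdy (pdy (fun r => (1 + g r) * r.2)) q * η q 2
        + pdy (pdy (fun r => (1 + g r) * wF r)) q * η q 3) :=
    eventuallyEq_on_open isOpen_Scone hzS hegE
  have heEc : ∀ q ∈ Scone, EcoefP (PhiCone g) q
      = -(pdx (fun r => 1 + g r) q * pdx (fun r => 1 + g r) q) + pdx (fun r => (1 + g r) * r.1) q * pdx (fun r => (1 + g r) * r.1) q + pdx (fun r => (1 + g r) * r.2) q * pdx (fun r => (1 + g r) * r.2) q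
        + pdx (fun r => (1 + g r) * wF r) q * pdx (fun r => (1 + g r) * wF r) q := by
    intro q hq
    unfold EcoefP mink
    rw [pdx_pi (hdComp q hq) 0, pdx_pi (hdComp q hq) 1, pdx_pi (hdComp q hq) 2,
      pdx_pi (hdComp q hq) 3, hc0, hc1, hc2, hc3]
  have evEc : EcoefP (PhiCone g) =ᶠ[nhds ((0, 0) : ℝ × ℝ)]
      (fun q => -(pdx (fun r => 1 + g r) q * pdx (fun r => 1 + g r) q) + pdx (fun r => (1 + g r) * r.1) q * pdx (fun r => (1 + g r) * r.1) q + pdx (fun r => (1 + g r) * r.2) q * pdx (fun r => (1 + g r) * r.2) q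
        + pdx (fun r => (1 + g r) * wF r) q * pdx (fun r => (1 + g r) * wF r) q) :=
    eventuallyEq_on_open isOpen_Scone hzS heEc
  have heFc : ∀ q ∈ Scone, FcoefP (PhiCone g) q
      = -(pdx (fun r => 1 + g r) q * pdy (fun r => 1 + g r) q) + pdx (fun r => (1 + g r) * r.1) q * pdy (fun r => (1 + g r) * r.1) q + pdx (fun r => (1 + g r) * r.2) q * pdy (fun r => (1 + g r) * r.2) q
        + pdx (fun r => (1 + g r) * wF r) q * pdy (fun r => (1 + g r) * wF r) q := by
    intro q hq
    unfold FcoefP mink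
    rw [pdx_pi (hdComp q hq) 0, pdx_pi (hdComp q hq) 1, pdx_pi (hdComp q hq) 2,
      pdx_pi (hdComp q hq) 3, pdy_pi (hdComp q hq) 0, pdy_pi (hdComp q hq) 1,
      pdy_pi (hdComp q hq) 2, pdy_pi (hdComp q hq) 3, hc0, hc1, hc2, hc3]
  have evFc : FcoefP (PhiCone g) =ᶠ[nhds ((0, 0) : ℝ × ℝ)]
      (fun q => -(pdx (fun r => 1 + g r) q * pdy (fun r => 1 + g r) q) + pdx (fun r => (1 + g r) * r.1) q * pdy (fun r => (1 + g r) * r.1) q + pdx (fun r => (1 + g r) * r.2) q * pdy (fun r => (1 + g r) * r.2) q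
        + pdx (fun r => (1 + g r) * wF r) q * pdy (fun r => (1 + g r) * wF r) q) :=
    eventuallyEq_on_open isOpen_Scone hzS heFc
  have heGc : ∀ q ∈ Scone, GcoefP (PhiCone g) q
      = -(pdy (fun r => 1 + g r) q * pdy (fun r => 1 + g r) q) + pdy (fun r => (1 + g r) * r.1) q * pdy (fun r => (1 + g r) * r.1) q + pdy (fun r => (1 + g r) * r.2) q * pdy (fun r => (1 + g r) * r.2) q
        + pdy (fun r => (1 + g r) * wF r) q * pdy (fun r => (1 + g r) * wF r) q := by
    intro q hq
    unfold GcoefP mink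
    rw [pdy_pi (hdComp q hq) 0, pdy_pi (hdComp q hq) 1, pdy_pi (hdComp q hq) 2,
      pdy_pi (hdComp q hq) 3, hc0, hc1, hc2, hc3]
  have evGc : GcoefP (PhiCone g) =ᶠ[nhds ((0, 0) : ℝ × ℝ)]
      (fun q => -(pdy (fun r => 1 + g r) q * pdy (fun r => 1 + g r) q) + pdy (fun r => (1 + g r) * r.1) q * pdy (fun r => (1 + g r) * r.1) q + pdy (fun r => (1 + g r) * r.2) q * pdy (fun r => (1 + g r) * r.2) q
        + pdy (fun r => (1 + g r) * wF r) q * pdy (fun r => (1 + g r) * wF r) q) :=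
    eventuallyEq_on_open isOpen_Scone hzS heGc
  have ddeE : DifferentiableAt ℝ (eEtaP (PhiCone g) η) (0, 0) :=
    DifferentiableAt.congr_of_eventuallyEq
      (((((dP0xx _ hzS).mul (hN 0)).neg.add ((dP1xx _ hzS).mul (hN 1))).add
        ((dP2xx _ hzS).mul (hN 2))).add ((dP3xx _ hzS).mul (hN 3))) eveE
  have ddfE : DifferentiableAt ℝ (fEtaP (PhiCone g) η) (0, 0) :=
    DifferentiableAt.congr_of_eventuallyEq
      (((((dP0xy _ hzS).mul (hN 0)).neg.add ((dP1xy _ hzS).mul (hN 1))).add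
        ((dP2xy _ hzS).mul (hN 2))).add ((dP3xy _ hzS).mul (hN 3))) evfE
  have ddgE : DifferentiableAt ℝ (gEtaP (PhiCone g) η) (0, 0) :=
    DifferentiableAt.congr_of_eventuallyEq
      (((((dP0yy _ hzS).mul (hN 0)).neg.add ((dP1yy _ hzS).mul (hN 1))).add
        ((dP2yy _ hzS).mul (hN 2))).add ((dP3yy _ hzS).mul (hN 3))) evgE
  have ddEc : DifferentiableAt ℝ (EcoefP (PhiCone g)) (0, 0) :=
    DifferentiableAt.congr_of_eventuallyEq
      ((((((dP0x _ hzS).mul (dP0x _ hzS)).neg).add ((dP1x _ hzS).mul (dP1x _ hzS))).add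
        ((dP2x _ hzS).mul (dP2x _ hzS))).add ((dP3x _ hzS).mul (dP3x _ hzS))) evEc
  have ddFc : DifferentiableAt ℝ (FcoefP (PhiCone g)) (0, 0) :=
    DifferentiableAt.congr_of_eventuallyEq
      ((((((dP0x _ hzS).mul (dP0y _ hzS)).neg).add ((dP1x _ hzS).mul (dP1y _ hzS))).add
        ((dP2x _ hzS).mul (dP2y _ hzS))).add ((dP3x _ hzS).mul (dP3y _ hzS))) evFc
  have ddGc : DifferentiableAt ℝ (GcoefP (PhiCone g)) (0, 0) :=
    DifferentiableAt.congr_of_eventuallyEq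
      ((((((dP0y _ hzS).mul (dP0y _ hzS)).neg).add ((dP1y _ hzS).mul (dP1y _ hzS))).add
        ((dP2y _ hzS).mul (dP2y _ hzS))).add ((dP3y _ hzS).mul (dP3y _ hzS))) evGc
  have veE : eEtaP (PhiCone g) η (0, 0) = k := by
    rw [heeE _ hzS]
    simp only [V0xx, V1xx, V2xx, V3xx, hN0z, hN1z, hN2z, hN3z]
    norm_num
    try ring
  have vfE : fEtaP (PhiCone g) η (0, 0) = 0 := by
    rw [hefE _ hzS]
    simp only [V0xy, V1xy, V2xy, V3xy, hN0z, hN1z, hN2z, hN3z]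
    norm_num
    try ring
  have vgE : gEtaP (PhiCone g) η (0, 0) = k := by
    rw [hegE _ hzS]
    simp only [V0yy, V1yy, V2yy, V3yy, hN0z, hN1z, hN2z, hN3z]
    norm_num
    try ring
  have vEc : EcoefP (PhiCone g) (0, 0) = 1 := by
    rw [heEc _ hzS]
    simp only [V0x, V1x, V2x, V3x]
    norm_num
    try ring
  have vFc : FcoefP (PhiCone g) (0, 0) = 0 := by
    rw [heFc _ hzS]
    simp only [V0x, V1x, V2x, V3x, V0y, V1y, V2y, V3y]
    norm_num
    try ring
  have vGc : GcoefP (PhiCone g) (0, 0) = 1 := by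
    rw [heGc _ hzS]
    simp only [V0y, V1y, V2y, V3y]
    norm_num
    try ring
  have dxeE : pdx (eEtaP (PhiCone g) η) (0, 0) = a := by
    rw [pdx_congr eveE, pdx_mink8 (dP0xx _ hzS) (hN 0) (dP1xx _ hzS) (hN 1)
      (dP2xx _ hzS) (hN 2) (dP3xx _ hzS) (hN 3)]
    simp only [T0xxx, T3xxx, V0xx, V1xx, V2xx, V3xx, ha0, ha3, hN0z, hN1z, hN2z, hN3z]
    norm_num
    try ring
  have dyeE : pdy (eEtaP (PhiCone g) η) (0, 0) = 0 := by
    rw [pdy_congr eveE, pdy_mink8 (dP0xx _ hzS) (hN 0) (dP1xx _ hzS) (hN 1)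
      (dP2xx _ hzS) (hN 2) (dP3xx _ hzS) (hN 3)]
    simp only [T0yxx, T3yxx, V0xx, V1xx, V2xx, V3xx, hb0, hb3, hN0z, hN1z, hN2z, hN3z]
    norm_num
    try ring
  have dxfE : pdx (fEtaP (PhiCone g) η) (0, 0) = 0 := by
    rw [pdx_congr evfE, pdx_mink8 (dP0xy _ hzS) (hN 0) (dP1xy _ hzS) (hN 1)
      (dP2xy _ hzS) (hN 2) (dP3xy _ hzS) (hN 3)]
    simp only [T0xxy, T3xxy, V0xy, V1xy, V2xy, V3xy, ha0, ha3, hN0z, hN1z, hN2z, hN3z]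
    norm_num
    try ring
  have dyfE : pdy (fEtaP (PhiCone g) η) (0, 0) = b := by
    rw [pdy_congr evfE, pdy_mink8 (dP0xy _ hzS) (hN 0) (dP1xy _ hzS) (hN 1)
      (dP2xy _ hzS) (hN 2) (dP3xy _ hzS) (hN 3)]
    simp only [T0yxy, T3yxy, V0xy, V1xy, V2xy, V3xy, hb0, hb3, hN0z, hN1z, hN2z, hN3z]
    norm_num
    try ring
  have dxgE : pdx (gEtaP (PhiCone g) η) (0, 0) = b := by
    rw [pdx_congr evgE, pdx_mink8 (dP0yy _ hzS) (hN 0) (dP1yy _ hzS) (hN 1)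
      (dP2yy _ hzS) (hN 2) (dP3yy _ hzS) (hN 3)]
    simp only [T0xyy, T3xyy, V0yy, V1yy, V2yy, V3yy, ha0, ha3, hN0z, hN1z, hN2z, hN3z]
    norm_num
    try ring
  have dygE : pdy (gEtaP (PhiCone g) η) (0, 0) = c := by
    rw [pdy_congr evgE, pdy_mink8 (dP0yy _ hzS) (hN 0) (dP1yy _ hzS) (hN 1)
      (dP2yy _ hzS) (hN 2) (dP3yy _ hzS) (hN 3)]
    simp only [T0yyy, T3yyy, V0yy, V1yy, V2yy, V3yy, hb0, hb3, hN0z, hN1z, hN2z, hN3z]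
    norm_num
    try ring
  have dxEc : pdx (EcoefP (PhiCone g)) (0, 0) = 0 := by
    rw [pdx_congr evEc, pdx_mink8 (dP0x _ hzS) (dP0x _ hzS) (dP1x _ hzS) (dP1x _ hzS) (dP2x _ hzS) (dP2x _ hzS) (dP3x _ hzS) (dP3x _ hzS)]
    simp only [V0xx, V1xx, V2xx, V3xx, V0x, V1x, V2x, V3x]
    norm_num
    try ring
  have dyEc : pdy (EcoefP (PhiCone g)) (0, 0) = 0 := by
    rw [pdy_congr evEc, pdy_mink8 (dP0x _ hzS) (dP0x _ hzS) (dP1x _ hzS) (dP1x _ hzS) (dP2x _ hzS) (dP2x _ hzS) (dP3x _ hzS) (dP3x _ hzS)]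
    simp only [V0yx, V1yx, V2yx, V3yx, V0x, V1x, V2x, V3x]
    norm_num
    try ring
  have dxFc : pdx (FcoefP (PhiCone g)) (0, 0) = 0 := by
    rw [pdx_congr evFc, pdx_mink8 (dP0x _ hzS) (dP0y _ hzS) (dP1x _ hzS) (dP1y _ hzS) (dP2x _ hzS) (dP2y _ hzS) (dP3x _ hzS) (dP3y _ hzS)]
    simp only [V0xx, V1xx, V2xx, V3xx, V0xy, V1xy, V2xy, V3xy, V0x, V1x, V2x, V3x, V0y, V1y, V2y, V3y]
    norm_num
    try ring
  have dyFc : pdy (FcoefP (PhiCone g)) (0, 0) = 0 := by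
    rw [pdy_congr evFc, pdy_mink8 (dP0x _ hzS) (dP0y _ hzS) (dP1x _ hzS) (dP1y _ hzS) (dP2x _ hzS) (dP2y _ hzS) (dP3x _ hzS) (dP3y _ hzS)]
    simp only [V0yx, V1yx, V2yx, V3yx, V0yy, V1yy, V2yy, V3yy, V0x, V1x, V2x, V3x, V0y, V1y, V2y, V3y]
    norm_num
    try ring
  have dxGc : pdx (GcoefP (PhiCone g)) (0, 0) = 0 := by
    rw [pdx_congr evGc, pdx_mink8 (dP0y _ hzS) (dP0y _ hzS) (dP1y _ hzS) (dP1y _ hzS) (dP2y _ hzS) (dP2y _ hzS) (dP3y _ hzS) (dP3y _ hzS)]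
    simp only [V0xy, V1xy, V2xy, V3xy, V0y, V1y, V2y, V3y]
    norm_num
    try ring
  have dyGc : pdy (GcoefP (PhiCone g)) (0, 0) = 0 := by
    rw [pdy_congr evGc, pdy_mink8 (dP0y _ hzS) (dP0y _ hzS) (dP1y _ hzS) (dP1y _ hzS) (dP2y _ hzS) (dP2y _ hzS) (dP3y _ hzS) (dP3y _ hzS)]
    simp only [V0yy, V1yy, V2yy, V3yy, V0y, V1y, V2y, V3y]
    norm_num
    try ring
  have hAf : AcoefP (PhiCone g) η = fun q =>
      fEtaP (PhiCone g) η q * GcoefP (PhiCone g) q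
        - gEtaP (PhiCone g) η q * FcoefP (PhiCone g) q := rfl
  have hBf : BcoefP (PhiCone g) η = fun q =>
      eEtaP (PhiCone g) η q * GcoefP (PhiCone g) q
        - gEtaP (PhiCone g) η q * EcoefP (PhiCone g) q := rfl
  have hCf : CcoefP (PhiCone g) η = fun q =>
      eEtaP (PhiCone g) η q * FcoefP (PhiCone g) q
        - fEtaP (PhiCone g) η q * EcoefP (PhiCone g) q := rfl
  have vA : AcoefP (PhiCone g) η (0, 0) = 0 := by
    unfold AcoefP; rw [vfE, vgE, vFc, vGc]; ring
  have vB : BcoefP (PhiCone g) η (0, 0) = 0 := by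
    unfold BcoefP; rw [veE, vgE, vEc, vGc]; ring
  have vC : CcoefP (PhiCone g) η (0, 0) = 0 := by
    unfold CcoefP; rw [veE, vfE, vEc, vFc]; ring
  have dxA : pdx (AcoefP (PhiCone g) η) (0, 0) = 0 := by
    rw [hAf, pdx_sub (ddfE.fun_mul ddGc) (ddgE.fun_mul ddFc), pdx_mul ddfE ddGc, pdx_mul ddgE ddFc]
    simp only [dxfE, vfE, dxGc, vGc, dxgE, vgE, dxFc, vFc]
    ring
  have dyA : pdy (AcoefP (PhiCone g) η) (0, 0) = b := by
    rw [hAf, pdy_sub (ddfE.fun_mul ddGc) (ddgE.fun_mul ddFc), pdy_mul ddfE ddGc, pdy_mul ddgE ddFc]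
    simp only [dyfE, vfE, dyGc, vGc, dygE, vgE, dyFc, vFc]
    ring
  have dxB : pdx (BcoefP (PhiCone g) η) (0, 0) = a - b := by
    rw [hBf, pdx_sub (ddeE.fun_mul ddGc) (ddgE.fun_mul ddEc), pdx_mul ddeE ddGc, pdx_mul ddgE ddEc]
    simp only [dxeE, veE, dxGc, vGc, dxgE, vgE, dxEc, vEc]
    ring
  have dyB : pdy (BcoefP (PhiCone g) η) (0, 0) = -c := by
    rw [hBf, pdy_sub (ddeE.fun_mul ddGc) (ddgE.fun_mul ddEc), pdy_mul ddeE ddGc, pdy_mul ddgE ddEc]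
    simp only [dyeE, veE, dyGc, vGc, dygE, vgE, dyEc, vEc]
    ring
  have dxC : pdx (CcoefP (PhiCone g) η) (0, 0) = 0 := by
    rw [hCf, pdx_sub (ddeE.fun_mul ddFc) (ddfE.fun_mul ddEc), pdx_mul ddeE ddFc, pdx_mul ddfE ddEc]
    simp only [dxeE, veE, dxFc, vFc, dxfE, vfE, dxEc, vEc]
    ring
  have dyC : pdy (CcoefP (PhiCone g) η) (0, 0) = -b := by
    rw [hCf, pdy_sub (ddeE.fun_mul ddFc) (ddfE.fun_mul ddEc), pdy_mul ddeE ddFc, pdy_mul ddfE ddEc]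
    simp only [dyeE, veE, dyFc, vFc, dyfE, vfE, dyEc, vEc]
    ring
  exact ⟨vA, vB, vC, dxA, dyA, dxB, dyB, dxC, dyC⟩
end
end

section
/- Let k, a, b, c ∈ ℝ and assume g(0,0) = g_x(0,0) = g_y(0,0) = 0, g_{xx}(0,0) = g_{yy}(0,0) = k, g_{xy}(0,0) = 0, g_{xxy}(0,0) = 0, g_{xxx}(0,0) = a, g_{xyy}(0,0) = b, g_{yyy}(0,0) = c. Let η be a C¹ map from a neighbourhood of the origin to ℝ⁴ with ⟨η, ξ⟩ = 1, ⟨η, η⟩ = 0, ⟨η, Φ_x⟩ = ⟨η, Φ_y⟩ = 0. Then A, B, C vanish at the origin and ∇A(0,0) = (0, b), ∇B(0,0) = (a − b, −c), ∇C(0,0) = (0, −b); i.e. the 1-jet of the differential equation of η-principal curvature lines is b y dy² + ((a − b)x − c y)dx dy − b y dx². -/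
noncomputable section

/-- The constant null vector `ξ = (1, 0, 0, 1)`. -/
def xiPlane : Fin 4 → ℝ := ![1, 0, 0, 1]

/-- The parametrization `Φ(x,y) = (1 + g(x,y), x, y, g(x,y))` of a surface in the
null hyperplane of `ℝ⁴₁` through `(1,0,0,0)` spanned by `(0,1,0,0)`, `(0,0,1,0)` and `ξ`. -/
def PhiPlane (g : ℝ × ℝ → ℝ) (p : ℝ × ℝ) : Fin 4 → ℝ :=
  ![1 + g p, p.1, p.2, g p]

/- ### Auxiliary lemmas -/

lemma contDiffAt_pd (f : ℝ × ℝ → ℝ) (p : ℝ × ℝ) (n : ℕ) (v : ℝ × ℝ)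
    (hf : ContDiffAt ℝ (n + 1 : ℕ) f p) :
    ContDiffAt ℝ n (fun q => fderiv ℝ f q v) p := by
  have h : ContDiffAt ℝ n (fderiv ℝ f) p := hf.fderiv_right (by exact_mod_cast le_rfl)
  exact h.clm_apply contDiffAt_const

lemma fderiv_pd_apply (f : ℝ × ℝ → ℝ) (p : ℝ × ℝ) (v w : ℝ × ℝ)
    (hf : ContDiffAt ℝ 2 f p) :
    fderiv ℝ (fun q => fderiv ℝ f q v) p w = fderiv ℝ (fderiv ℝ f) p w v := by
  have h1 : DifferentiableAt ℝ (fderiv ℝ f) p :=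
    (hf.fderiv_right (n := 2) (m := 1) (by norm_num)).differentiableAt (by norm_num)
  have h2 := ((ContinuousLinearMap.apply ℝ ℝ v).hasFDerivAt.comp p h1.hasFDerivAt).fderiv
  have h3 : (fun q => fderiv ℝ f q v) = (ContinuousLinearMap.apply ℝ ℝ v) ∘ (fderiv ℝ f) := rfl
  rw [h3, h2]
  rfl

lemma pd_comm (f : ℝ × ℝ → ℝ) (p : ℝ × ℝ) (hf : ContDiffAt ℝ 2 f p) :
    pdx (pdy f) p = pdy (pdx f) p := by
  have hs := hf.isSymmSndFDerivAt (n := 2) (by norm_num)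
  show fderiv ℝ (fun q => fderiv ℝ f q (0,1)) p (1,0)
      = fderiv ℝ (fun q => fderiv ℝ f q (1,0)) p (0,1)
  rw [fderiv_pd_apply f p _ _ hf, fderiv_pd_apply f p _ _ hf, hs]

lemma hasFDerivAt_Phi (g : ℝ × ℝ → ℝ) (p : ℝ × ℝ) (hg : DifferentiableAt ℝ g p) :
    HasFDerivAt (PhiPlane g)
      (ContinuousLinearMap.pi ![fderiv ℝ g p, ContinuousLinearMap.fst ℝ ℝ ℝ,
        ContinuousLinearMap.snd ℝ ℝ ℝ, fderiv ℝ g p]) p := by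
  rw [hasFDerivAt_pi']
  intro i
  rw [ContinuousLinearMap.proj_pi]
  fin_cases i
  · exact (hg.hasFDerivAt.const_add 1)
  · exact hasFDerivAt_fst
  · exact hasFDerivAt_snd
  · exact hg.hasFDerivAt

lemma pdx_Phi (g : ℝ × ℝ → ℝ) (p : ℝ × ℝ) (hg : DifferentiableAt ℝ g p) :
    pdx (PhiPlane g) p = ![pdx g p, 1, 0, pdx g p] := by
  show fderiv ℝ (PhiPlane g) p (1, 0) = _
  rw [(hasFDerivAt_Phi g p hg).fderiv]
  funext i
  fin_cases i <;> simp [pdx]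

lemma pdy_Phi (g : ℝ × ℝ → ℝ) (p : ℝ × ℝ) (hg : DifferentiableAt ℝ g p) :
    pdy (PhiPlane g) p = ![pdy g p, 0, 1, pdy g p] := by
  show fderiv ℝ (PhiPlane g) p (0, 1) = _
  rw [(hasFDerivAt_Phi g p hg).fderiv]
  funext i
  fin_cases i <;> simp [pdy]

lemma hasFDerivAt_vec (h : ℝ × ℝ → ℝ) (c1 c2 : ℝ) (p : ℝ × ℝ) (hh : DifferentiableAt ℝ h p) :
    HasFDerivAt (fun q => (![h q, c1, c2, h q] : Fin 4 → ℝ))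
      (ContinuousLinearMap.pi ![fderiv ℝ h p, 0, 0, fderiv ℝ h p]) p := by
  rw [hasFDerivAt_pi']
  intro i
  rw [ContinuousLinearMap.proj_pi]
  fin_cases i
  · exact hh.hasFDerivAt
  · exact hasFDerivAt_const c1 p
  · exact hasFDerivAt_const c2 p
  · exact hh.hasFDerivAt

theorem stmt15 (g : ℝ × ℝ → ℝ) (V : Set (ℝ × ℝ)) (hV : V ∈ nhds ((0, 0) : ℝ × ℝ))
    (hg : ContDiffOn ℝ (⊤ : ℕ∞) g V)
    (k a b c : ℝ)
    (hg0 : g (0, 0) = 0) (hgx : pdx g (0, 0) = 0) (hgy : pdy g (0, 0) = 0)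
    (hgxx : pdx (pdx g) (0, 0) = k) (hgyy : pdy (pdy g) (0, 0) = k)
    (hgxy : pdx (pdy g) (0, 0) = 0)
    (hgxxy : pdx (pdx (pdy g)) (0, 0) = 0)
    (hgxxx : pdx (pdx (pdx g)) (0, 0) = a)
    (hgxyy : pdx (pdy (pdy g)) (0, 0) = b)
    (hgyyy : pdy (pdy (pdy g)) (0, 0) = c)
    (U : Set (ℝ × ℝ)) (hU : U ∈ nhds ((0, 0) : ℝ × ℝ))
    (η : ℝ × ℝ → (Fin 4 → ℝ)) (hη : ContDiffOn ℝ 1 η U)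
    (h1 : ∀ p ∈ U, mink (η p) xiPlane = 1)
    (h2 : ∀ p ∈ U, mink (η p) (η p) = 0)
    (h3 : ∀ p ∈ U, mink (η p) (pdx (PhiPlane g) p) = 0)
    (h4 : ∀ p ∈ U, mink (η p) (pdy (PhiPlane g) p) = 0) :
    AcoefP (PhiPlane g) η (0, 0) = 0 ∧
    BcoefP (PhiPlane g) η (0, 0) = 0 ∧
    CcoefP (PhiPlane g) η (0, 0) = 0 ∧
    pdx (AcoefP (PhiPlane g) η) (0, 0) = 0 ∧
    pdy (AcoefP (PhiPlane g) η) (0, 0) = b ∧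
    pdx (BcoefP (PhiPlane g) η) (0, 0) = a - b ∧
    pdy (BcoefP (PhiPlane g) η) (0, 0) = -c ∧
    pdx (CcoefP (PhiPlane g) η) (0, 0) = 0 ∧
    pdy (CcoefP (PhiPlane g) η) (0, 0) = -b := by
  classical
  -- Get a neighbourhood on which `g` is `C⁴`.
  obtain ⟨u, hu, hgu⟩ : ∃ u ∈ nhds ((0,0) : ℝ × ℝ), ContDiffOn ℝ 4 g u :=
    (hg.contDiffAt hV).contDiffOn (m := 4) (by exact WithTop.coe_le_coe.2 (le_top : (4:ℕ∞) ≤ ⊤)) (by simp)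
  set W : Set (ℝ × ℝ) := interior u ∩ interior U with hWdef
  have hWo : IsOpen W := isOpen_interior.inter isOpen_interior
  have hW0 : ((0,0) : ℝ × ℝ) ∈ W :=
    ⟨mem_interior_iff_mem_nhds.2 hu, mem_interior_iff_mem_nhds.2 hU⟩
  have hWU : W ⊆ U := fun p hp => interior_subset hp.2
  have hgat : ∀ p ∈ W, ContDiffAt ℝ 4 g p := fun p hp =>
    hgu.contDiffAt (mem_interior_iff_mem_nhds.1 hp.1)
  have hdiff : ∀ p ∈ W, DifferentiableAt ℝ g p := fun p hp =>
    (hgat p hp).differentiableAt (by norm_num)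
  -- first derivatives of Φ on W
  have hpx : ∀ p ∈ W, pdx (PhiPlane g) p = ![pdx g p, 1, 0, pdx g p] :=
    fun p hp => pdx_Phi g p (hdiff p hp)
  have hpy : ∀ p ∈ W, pdy (PhiPlane g) p = ![pdy g p, 0, 1, pdy g p] :=
    fun p hp => pdy_Phi g p (hdiff p hp)
  -- differentiability of the first partials of g on W
  have hdx : ∀ p ∈ W, DifferentiableAt ℝ (pdx g) p := fun p hp =>
    (contDiffAt_pd g p 1 (1,0) ((hgat p hp).of_le (by norm_num))).differentiableAt (by norm_num)
  have hdy : ∀ p ∈ W, DifferentiableAt ℝ (pdy g) p := fun p hp =>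
    (contDiffAt_pd g p 1 (0,1) ((hgat p hp).of_le (by norm_num))).differentiableAt (by norm_num)
  -- second derivatives of Φ on W
  have hXX : ∀ p ∈ W, pdx (pdx (PhiPlane g)) p
      = ![pdx (pdx g) p, 0, 0, pdx (pdx g) p] := by
    intro p hp
    have hev : pdx (PhiPlane g) =ᶠ[nhds p] fun q => (![pdx g q, 1, 0, pdx g q] : Fin 4 → ℝ) := by
      filter_upwards [hWo.mem_nhds hp] with q hq using hpx q hq
    show fderiv ℝ (pdx (PhiPlane g)) p (1,0) = _
    rw [hev.fderiv_eq, (hasFDerivAt_vec (pdx g) 1 0 p (hdx p hp)).fderiv]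
    funext i
    fin_cases i <;> simp [pdx]
  have hXY : ∀ p ∈ W, pdx (pdy (PhiPlane g)) p
      = ![pdx (pdy g) p, 0, 0, pdx (pdy g) p] := by
    intro p hp
    have hev : pdy (PhiPlane g) =ᶠ[nhds p] fun q => (![pdy g q, 0, 1, pdy g q] : Fin 4 → ℝ) := by
      filter_upwards [hWo.mem_nhds hp] with q hq using hpy q hq
    show fderiv ℝ (pdy (PhiPlane g)) p (1,0) = _
    rw [hev.fderiv_eq, (hasFDerivAt_vec (pdy g) 0 1 p (hdy p hp)).fderiv]
    funext i
    fin_cases i <;> simp [pdx]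
  have hYY : ∀ p ∈ W, pdy (pdy (PhiPlane g)) p
      = ![pdy (pdy g) p, 0, 0, pdy (pdy g) p] := by
    intro p hp
    have hev : pdy (PhiPlane g) =ᶠ[nhds p] fun q => (![pdy g q, 0, 1, pdy g q] : Fin 4 → ℝ) := by
      filter_upwards [hWo.mem_nhds hp] with q hq using hpy q hq
    show fderiv ℝ (pdy (PhiPlane g)) p (0,1) = _
    rw [hev.fderiv_eq, (hasFDerivAt_vec (pdy g) 0 1 p (hdy p hp)).fderiv]
    funext i
    fin_cases i <;> simp [pdy]
  -- first fundamental form on W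
  have hE : ∀ p ∈ W, EcoefP (PhiPlane g) p = 1 := by
    intro p hp; unfold EcoefP; rw [hpx p hp]; simp [mink]
  have hF : ∀ p ∈ W, FcoefP (PhiPlane g) p = 0 := by
    intro p hp; unfold FcoefP; rw [hpx p hp, hpy p hp]; simp [mink]
  have hG : ∀ p ∈ W, GcoefP (PhiPlane g) p = 1 := by
    intro p hp; unfold GcoefP; rw [hpy p hp]; simp [mink]
  -- the normalization of η
  have hxi : ∀ p ∈ W, -(η p 0) + η p 3 = 1 := by
    intro p hp
    have := h1 p (hWU hp)
    simp [mink, xiPlane] at this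
    linarith
  -- second fundamental form on W
  have he : ∀ p ∈ W, eEtaP (PhiPlane g) η p = pdx (pdx g) p := by
    intro p hp; unfold eEtaP; rw [hXX p hp]; simp [mink]
    linear_combination (pdx (pdx g) p) * hxi p hp
  have hf : ∀ p ∈ W, fEtaP (PhiPlane g) η p = pdx (pdy g) p := by
    intro p hp; unfold fEtaP; rw [hXY p hp]; simp [mink]
    linear_combination (pdx (pdy g) p) * hxi p hp
  have hgc : ∀ p ∈ W, gEtaP (PhiPlane g) η p = pdy (pdy g) p := by
    intro p hp; unfold gEtaP; rw [hYY p hp]; simp [mink]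
    linear_combination (pdy (pdy g) p) * hxi p hp
  -- the coefficients on W
  have hA : ∀ p ∈ W, AcoefP (PhiPlane g) η p = pdx (pdy g) p := by
    intro p hp; unfold AcoefP
    rw [hf p hp, hG p hp, hgc p hp, hF p hp]; ring
  have hB : ∀ p ∈ W, BcoefP (PhiPlane g) η p = pdx (pdx g) p - pdy (pdy g) p := by
    intro p hp; unfold BcoefP
    rw [he p hp, hG p hp, hgc p hp, hE p hp]; ring
  have hC : ∀ p ∈ W, CcoefP (PhiPlane g) η p = -(pdx (pdy g) p) := by
    intro p hp; unfold CcoefP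
    rw [he p hp, hF p hp, hf p hp, hE p hp]; ring
  -- eventual equalities at the origin
  have hAev : AcoefP (PhiPlane g) η =ᶠ[nhds ((0,0) : ℝ × ℝ)] fun p => pdx (pdy g) p := by
    filter_upwards [hWo.mem_nhds hW0] with q hq using hA q hq
  have hBev : BcoefP (PhiPlane g) η
      =ᶠ[nhds ((0,0) : ℝ × ℝ)] fun p => pdx (pdx g) p - pdy (pdy g) p := by
    filter_upwards [hWo.mem_nhds hW0] with q hq using hB q hq
  have hCev : CcoefP (PhiPlane g) η =ᶠ[nhds ((0,0) : ℝ × ℝ)] fun p => -(pdx (pdy g) p) := by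
    filter_upwards [hWo.mem_nhds hW0] with q hq using hC q hq
  -- differentiability of the second partials at the origin
  have hg40 := hgat _ hW0
  have hdxx : DifferentiableAt ℝ (fun p => pdx (pdx g) p) ((0,0) : ℝ × ℝ) := by
    have h2 : ContDiffAt ℝ 2 (fun q => fderiv ℝ g q (1,0)) ((0,0) : ℝ × ℝ) :=
      contDiffAt_pd g _ 2 (1,0) (hg40.of_le (by norm_num))
    exact (contDiffAt_pd _ _ 1 (1,0) (h2.of_le (by norm_num))).differentiableAt (by norm_num)
  have hdyy : DifferentiableAt ℝ (fun p => pdy (pdy g) p) ((0,0) : ℝ × ℝ) := by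
    have h2 : ContDiffAt ℝ 2 (fun q => fderiv ℝ g q (0,1)) ((0,0) : ℝ × ℝ) :=
      contDiffAt_pd g _ 2 (0,1) (hg40.of_le (by norm_num))
    exact (contDiffAt_pd _ _ 1 (0,1) (h2.of_le (by norm_num))).differentiableAt (by norm_num)
  -- symmetry of mixed partials
  have hpdyg2 : ContDiffAt ℝ 2 (pdy g) ((0,0) : ℝ × ℝ) :=
    contDiffAt_pd g _ 2 (0,1) (hg40.of_le (by norm_num))
  have hpdxg2 : ContDiffAt ℝ 2 (pdx g) ((0,0) : ℝ × ℝ) :=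
    contDiffAt_pd g _ 2 (1,0) (hg40.of_le (by norm_num))
  -- pdy (pdx (pdy g)) (0,0) = b
  have key1 : pdy (pdx (pdy g)) ((0,0) : ℝ × ℝ) = b := by
    rw [← pd_comm (pdy g) _ hpdyg2]; exact hgxyy
  -- pdy (pdx (pdx g)) (0,0) = 0
  have hswap : (pdy (pdx g)) =ᶠ[nhds ((0,0) : ℝ × ℝ)] (pdx (pdy g)) := by
    filter_upwards [hWo.mem_nhds hW0] with q hq
    exact (pd_comm g q ((hgat q hq).of_le (by norm_num))).symm
  have key2 : pdy (pdx (pdx g)) ((0,0) : ℝ × ℝ) = 0 := by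
    rw [← pd_comm (pdx g) _ hpdxg2]
    show fderiv ℝ (pdy (pdx g)) ((0,0) : ℝ × ℝ) (1,0) = 0
    rw [hswap.fderiv_eq]
    exact hgxxy
  -- now the nine claims
  refine ⟨?_, ?_, ?_, ?_, ?_, ?_, ?_, ?_, ?_⟩
  · rw [hA _ hW0, hgxy]
  · rw [hB _ hW0, hgxx, hgyy]; ring
  · rw [hC _ hW0, hgxy]; ring
  · show fderiv ℝ (AcoefP (PhiPlane g) η) ((0,0) : ℝ × ℝ) (1,0) = 0
    rw [hAev.fderiv_eq]; exact hgxxy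
  · show fderiv ℝ (AcoefP (PhiPlane g) η) ((0,0) : ℝ × ℝ) (0,1) = b
    rw [hAev.fderiv_eq]; exact key1
  · show fderiv ℝ (BcoefP (PhiPlane g) η) ((0,0) : ℝ × ℝ) (1,0) = a - b
    rw [hBev.fderiv_eq, fderiv_fun_sub hdxx hdyy]
    have : fderiv ℝ (fun p => pdx (pdx g) p) ((0,0) : ℝ × ℝ) (1,0)
        - fderiv ℝ (fun p => pdy (pdy g) p) ((0,0) : ℝ × ℝ) (1,0) = a - b := by
      rw [show fderiv ℝ (fun p => pdx (pdx g) p) ((0,0) : ℝ × ℝ) (1,0)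
          = pdx (pdx (pdx g)) ((0,0) : ℝ × ℝ) from rfl,
        show fderiv ℝ (fun p => pdy (pdy g) p) ((0,0) : ℝ × ℝ) (1,0)
          = pdx (pdy (pdy g)) ((0,0) : ℝ × ℝ) from rfl, hgxxx, hgxyy]
    simpa using this
  · show fderiv ℝ (BcoefP (PhiPlane g) η) ((0,0) : ℝ × ℝ) (0,1) = -c
    rw [hBev.fderiv_eq, fderiv_fun_sub hdxx hdyy]
    have : fderiv ℝ (fun p => pdx (pdx g) p) ((0,0) : ℝ × ℝ) (0,1)
        - fderiv ℝ (fun p => pdy (pdy g) p) ((0,0) : ℝ × ℝ) (0,1) = -c := by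
      rw [show fderiv ℝ (fun p => pdx (pdx g) p) ((0,0) : ℝ × ℝ) (0,1)
          = pdy (pdx (pdx g)) ((0,0) : ℝ × ℝ) from rfl,
        show fderiv ℝ (fun p => pdy (pdy g) p) ((0,0) : ℝ × ℝ) (0,1)
          = pdy (pdy (pdy g)) ((0,0) : ℝ × ℝ) from rfl, key2, hgyyy]
      ring
    simpa using this
  · show fderiv ℝ (CcoefP (PhiPlane g) η) ((0,0) : ℝ × ℝ) (1,0) = 0
    rw [hCev.fderiv_eq, fderiv_fun_neg]
    have : -(fderiv ℝ (fun p => pdx (pdy g) p) ((0,0) : ℝ × ℝ) (1,0)) = 0 := by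
      rw [show fderiv ℝ (fun p => pdx (pdy g) p) ((0,0) : ℝ × ℝ) (1,0)
          = pdx (pdx (pdy g)) ((0,0) : ℝ × ℝ) from rfl, hgxxy]; ring
    simpa using this
  · show fderiv ℝ (CcoefP (PhiPlane g) η) ((0,0) : ℝ × ℝ) (0,1) = -b
    rw [hCev.fderiv_eq, fderiv_fun_neg]
    have : -(fderiv ℝ (fun p => pdx (pdy g) p) ((0,0) : ℝ × ℝ) (0,1)) = -b := by
      rw [show fderiv ℝ (fun p => pdx (pdy g) p) ((0,0) : ℝ × ℝ) (0,1)
          = pdy (pdx (pdy g)) ((0,0) : ℝ × ℝ) from rfl, key1]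
    simpa using this
end
end
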